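/- arXiv:1408.2136 — 7 statements merged into one kernel-verified Lean document; each statement's English description precedes it below -/
import Mathlib

section
/- Given a fixed linearly independent subset of size j of F^n, the number of ordered n-tuples of lines in V_1 extending it to a basis of F^n (i.e., ordered n-tuples forming a basis whose first j entries are the fixed vectors) is q^{(n(n-1)-j(j-1))/2} · ∏_{k=1}^{n-j} [k]_q. -/
open Finset Projectivization

attribute [local instance] Fintype.ofFinite


private lemma exists_unit_smul_rep {F : Type*} [Field F] {n : ℕ} {x : Fin n → F} (hx : x ≠ 0) :
    ∃ c : Fˣ, c • (Projectivization.mk F x hx).rep = x :=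
  (mk_eq_mk_iff F _ _ hx (rep_nonzero _)).mp (mk_rep _).symm

private lemma card_S_mul (F : Type*) [Field F] [Fintype F] (n j : ℕ) (hj : j ≤ n)
    (w : Fin j → (Fin n → F)) (hw : LinearIndependent F w) (hw0 : ∀ i, w i ≠ 0) :
    Nat.card {b : Fin n → Projectivization F (Fin n → F) //
        (∀ i : Fin j, b (Fin.castLE hj i) = Projectivization.mk F (w i) (hw0 i)) ∧
        LinearIndependent F (fun i => (b i).rep)} * (Fintype.card F - 1) ^ n
      = Nat.card {v : Fin n → (Fin n → F) // LinearIndependent F v ∧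
          ∀ i : Fin j, v (Fin.castLE hj i) = w i} * (Fintype.card F - 1) ^ j := by
  classical
  set S := {b : Fin n → Projectivization F (Fin n → F) //
      (∀ i : Fin j, b (Fin.castLE hj i) = Projectivization.mk F (w i) (hw0 i)) ∧
      LinearIndependent F (fun i => (b i).rep)}
  set A := {v : Fin n → (Fin n → F) // LinearIndependent F v ∧
      ∀ i : Fin j, v (Fin.castLE hj i) = w i}
  have e1 : {v : Fin n → (Fin n → F) // LinearIndependent F v ∧
      ∀ i : Fin j, ∃ c : Fˣ, v (Fin.castLE hj i) = c • w i} ≃ S × (Fin n → Fˣ) := {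
    toFun := fun v =>
      (⟨fun i => Projectivization.mk F (v.1 i) (v.2.1.ne_zero i),
        fun i => by
          obtain ⟨c, hc⟩ := v.2.2 i
          exact (mk_eq_mk_iff F _ _ _ _).mpr ⟨c, hc.symm⟩,
        by
          have h : (fun i => (Projectivization.mk F (v.1 i) (v.2.1.ne_zero i)).rep)
              = fun i => ((exists_unit_smul_rep (v.2.1.ne_zero i)).choose)⁻¹ • v.1 i :=
            funext fun i =>
              eq_inv_smul_iff.mpr (exists_unit_smul_rep (v.2.1.ne_zero i)).choose_spec
          rw [h]
          exact v.2.1.units_smul _⟩,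
       fun i => (exists_unit_smul_rep (v.2.1.ne_zero i)).choose)
    invFun := fun p =>
      ⟨fun i => (p.2 i : Fˣ) • (p.1.1 i).rep,
        (p.1.2.2).units_smul p.2,
        fun i => by
          obtain ⟨c, hc⟩ := exists_unit_smul_rep (hw0 i)
          refine ⟨p.2 (Fin.castLE hj i) * c⁻¹, ?_⟩
          show p.2 (Fin.castLE hj i) • ((p.1 : Fin n → Projectivization F (Fin n → F))
            (Fin.castLE hj i)).rep = _
          have hrep : (Projectivization.mk F (w i) (hw0 i)).rep = c⁻¹ • w i :=
            eq_inv_smul_iff.mpr hc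
          rw [p.1.2.1 i, hrep, smul_smul]⟩
    left_inv := fun v =>
      Subtype.ext (funext fun i => (exists_unit_smul_rep (v.2.1.ne_zero i)).choose_spec)
    right_inv := fun p => by
      obtain ⟨b, u⟩ := p
      have hmk : ∀ (i : Fin n) (h : u i • ((b : Fin n → Projectivization F (Fin n → F)) i).rep ≠ 0),
          Projectivization.mk F (u i • ((b : Fin n → Projectivization F (Fin n → F)) i).rep) h
            = (b : Fin n → Projectivization F (Fin n → F)) i := fun i h => by
        conv_rhs => rw [← Projectivization.mk_rep ((b : Fin n → Projectivization F (Fin n → F)) i)]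
        exact (mk_eq_mk_iff F _ _ _ _).mpr ⟨u i, rfl⟩
      refine Prod.ext ?_ ?_
      · exact Subtype.ext (funext fun i => hmk i _)
      · funext i
        set bi := (b : Fin n → Projectivization F (Fin n → F)) i with hbi
        have hne : u i • bi.rep ≠ 0 := by
          simp [Units.smul_def, smul_ne_zero_iff, rep_nonzero]
        have hrep : (Projectivization.mk F (u i • bi.rep) hne).rep = bi.rep :=
          congrArg Projectivization.rep (hmk i hne)
        have hs := (exists_unit_smul_rep hne).choose_spec
        have hkey : (exists_unit_smul_rep hne).choose • bi.rep = u i • bi.rep :=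
          (congrArg (fun z => (exists_unit_smul_rep hne).choose • z) hrep).symm.trans hs
        show (exists_unit_smul_rep hne).choose = u i
        simp only [Units.smul_def] at hkey
        exact Units.ext (smul_left_injective F (rep_nonzero bi) hkey) }
  have e2 : {v : Fin n → (Fin n → F) // LinearIndependent F v ∧
      ∀ i : Fin j, ∃ c : Fˣ, v (Fin.castLE hj i) = c • w i} ≃ A × (Fin j → Fˣ) := {
    toFun := fun v =>
      (⟨fun k => if h : (k : ℕ) < j then w ⟨k.1, h⟩ else v.1 k,
        by
          have hfe : (fun k : Fin n => if h : (k : ℕ) < j then w ⟨k.1, h⟩ else v.1 k)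
              = fun k : Fin n =>
                (if h : (k : ℕ) < j then ((v.2.2 ⟨k.1, h⟩).choose)⁻¹ else 1) • v.1 k := by
            funext k
            by_cases h : (k : ℕ) < j
            · simp only [dif_pos h]
              have hs : v.1 k = (v.2.2 ⟨k.1, h⟩).choose • w ⟨k.1, h⟩ :=
                (v.2.2 ⟨k.1, h⟩).choose_spec
              rw [hs, inv_smul_smul]
            · simp only [dif_neg h, one_smul]
          rw [hfe]
          exact v.2.1.units_smul _,
        fun i => by
          show (if h : ((Fin.castLE hj i : Fin n) : ℕ) < j
            then w ⟨(Fin.castLE hj i : Fin n).1, h⟩ else v.1 (Fin.castLE hj i)) = w i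
          exact dif_pos i.isLt⟩,
       fun i => (v.2.2 i).choose)
    invFun := fun p =>
      ⟨fun k => if h : (k : ℕ) < j then (p.2 ⟨k.1, h⟩ : Fˣ) • w ⟨k.1, h⟩ else p.1.1 k,
        by
          have hfe : (fun k : Fin n => if h : (k : ℕ) < j then (p.2 ⟨k.1, h⟩ : Fˣ) • w ⟨k.1, h⟩
                else p.1.1 k)
              = fun k : Fin n => (if h : (k : ℕ) < j then p.2 ⟨k.1, h⟩ else 1) • p.1.1 k := by
            funext k
            by_cases h : (k : ℕ) < j
            · simp only [dif_pos h]
              have ha : p.1.1 k = w ⟨k.1, h⟩ := p.1.2.2 ⟨k.1, h⟩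
              rw [ha]
            · simp only [dif_neg h, one_smul]
          rw [hfe]
          exact p.1.2.1.units_smul _,
        fun i => ⟨p.2 i, by
          show (if h : ((Fin.castLE hj i : Fin n) : ℕ) < j
            then (p.2 ⟨(Fin.castLE hj i : Fin n).1, h⟩ : Fˣ) • w ⟨(Fin.castLE hj i : Fin n).1, h⟩
            else p.1.1 (Fin.castLE hj i)) = p.2 i • w i
          exact dif_pos i.isLt⟩⟩
    left_inv := fun v => by
      refine Subtype.ext (funext fun k => ?_)
      by_cases h : (k : ℕ) < j
      · simp only [dif_pos h]
        exact ((v.2.2 ⟨k.1, h⟩).choose_spec).symm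
      · simp only [dif_neg h]
    right_inv := fun p => by
      obtain ⟨a, c⟩ := p
      refine Prod.ext ?_ ?_
      · refine Subtype.ext (funext fun k => ?_)
        by_cases h : (k : ℕ) < j
        · simp only [dif_pos h]
          exact (a.2.2 ⟨k.1, h⟩).symm
        · simp only [dif_neg h]
      · funext i
        set vv : {v : Fin n → (Fin n → F) // LinearIndependent F v ∧
            ∀ i : Fin j, ∃ cc : Fˣ, v (Fin.castLE hj i) = cc • w i} :=
          ⟨fun k => if h : (k : ℕ) < j then (c ⟨k.1, h⟩ : Fˣ) • w ⟨k.1, h⟩ else a.1 k, by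
            have hfe : (fun k : Fin n => if h : (k : ℕ) < j then (c ⟨k.1, h⟩ : Fˣ) • w ⟨k.1, h⟩
                  else a.1 k)
                = fun k : Fin n => (if h : (k : ℕ) < j then c ⟨k.1, h⟩ else 1) • a.1 k := by
              funext k
              by_cases h : (k : ℕ) < j
              · simp only [dif_pos h]
                have ha : a.1 k = w ⟨k.1, h⟩ := a.2.2 ⟨k.1, h⟩
                rw [ha]
              · simp only [dif_neg h, one_smul]
            rw [hfe]
            exact a.2.1.units_smul _, fun i => ⟨c i, by
              show (if h : ((Fin.castLE hj i : Fin n) : ℕ) < j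
                then (c ⟨(Fin.castLE hj i : Fin n).1, h⟩ : Fˣ) • w ⟨(Fin.castLE hj i : Fin n).1, h⟩
                else a.1 (Fin.castLE hj i)) = c i • w i
              exact dif_pos i.isLt⟩⟩ with hvv
        show (vv.2.2 i).choose = c i
        have h1 : vv.1 (Fin.castLE hj i) = c i • w i := dif_pos i.isLt
        have h2 : vv.1 (Fin.castLE hj i) = (vv.2.2 i).choose • w i := (vv.2.2 i).choose_spec
        have hkey : (vv.2.2 i).choose • w i = (c i : Fˣ) • w i := h2.symm.trans h1
        simp only [Units.smul_def] at hkey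
        exact Units.ext (smul_left_injective F (hw0 i) hkey) }
  have hcard := (Nat.card_congr e1).symm.trans (Nat.card_congr e2)
  rw [Nat.card_prod, Nat.card_prod] at hcard
  have hu : ∀ m : ℕ, Nat.card (Fin m → Fˣ) = (Fintype.card F - 1) ^ m := fun m => by
    rw [Nat.card_eq_fintype_card, Fintype.card_fun, Fintype.card_units, Fintype.card_fin]
  rw [hu, hu] at hcard
  exact hcard


attribute [local instance] Fintype.ofFinite

private lemma card_vec_ext (F : Type*) [Field F] [Fintype F] (n : ℕ) (d : ℕ) :
    ∀ (j : ℕ) (hjd : j + d = n) (w : Fin j → (Fin n → F)), LinearIndependent F w →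
    Nat.card {v : Fin n → (Fin n → F) // LinearIndependent F v ∧
        ∀ i : Fin j, v (Fin.castLE (by omega) i) = w i} =
      ∏ m ∈ Finset.range d, (Fintype.card F ^ n - Fintype.card F ^ (j + m)) := by
  induction d with
  | zero =>
    intro j hjd w hw
    obtain rfl : j = n := by omega
    rw [Finset.range_zero, Finset.prod_empty, Nat.card_eq_one_iff_unique]
    refine ⟨⟨fun a b => Subtype.ext (funext fun i => (a.2.2 i).trans (b.2.2 i).symm)⟩,
      ⟨w, hw, fun i => rfl⟩⟩
  | succ d ih =>
    intro j hjd w hw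
    have hjn : j ≤ n := by omega
    have hjltn : j < n := by omega
    classical
    let C := ((Submodule.span F (Set.range w) : Set (Fin n → F))ᶜ : Set (Fin n → F))
    let f : {v : Fin n → Fin n → F // LinearIndependent F v ∧
        ∀ i : Fin j, v (Fin.castLE (by omega) i) = w i} → C := fun v =>
      ⟨v.1 ⟨j, hjltn⟩, by
        have h1 : Set.range w = v.1 '' Set.range (Fin.castLE hjn) := by
          rw [← Set.range_comp]
          exact congrArg Set.range (funext fun i => (v.2.2 i).symm)
        simp only [C, Set.mem_compl_iff, SetLike.mem_coe]
        rw [h1]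
        apply v.2.1.notMem_span_image
        rintro ⟨i, hi⟩
        have := congrArg Fin.val hi
        simp only [Fin.coe_castLE] at this
        omega⟩
    rw [← Nat.card_congr (Equiv.sigmaFiberEquiv f), Nat.card_eq_fintype_card,
      Fintype.card_sigma]
    have hfib : ∀ x : C, Fintype.card {v // f v = x} =
        ∏ m ∈ Finset.range d, (Fintype.card F ^ n - Fintype.card F ^ (j + 1 + m)) := by
      intro x
      have hxns : (x : Fin n → F) ∉ Submodule.span F (Set.range w) := x.2
      have hsnoc : LinearIndependent F (Fin.snoc w (x : Fin n → F) : Fin (j+1) → (Fin n → F)) :=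
        linearIndependent_fin_snoc.mpr ⟨hw, hxns⟩
      rw [← Nat.card_eq_fintype_card]
      have e1 : {v // f v = x} ≃
          {v : Fin n → Fin n → F // (LinearIndependent F v ∧
            ∀ i : Fin j, v (Fin.castLE hjn i) = w i) ∧ v ⟨j, hjltn⟩ = (x : Fin n → F)} :=
        { toFun := fun v => ⟨v.1.1, ⟨v.1.2, congrArg Subtype.val v.2⟩⟩,
          invFun := fun v => ⟨⟨v.1, v.2.1⟩, Subtype.ext v.2.2⟩,
          left_inv := fun v => rfl, right_inv := fun v => rfl }
      have e : {v // f v = x} ≃ {v : Fin n → Fin n → F // LinearIndependent F v ∧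
          ∀ i : Fin (j+1), v (Fin.castLE (by omega) i) =
            (Fin.snoc w (x : Fin n → F) : Fin (j+1) → (Fin n → F)) i} := by
        refine e1.trans (Equiv.subtypeEquivRight (fun v => ?_))
        · constructor
          · rintro ⟨⟨hli, hfirst⟩, hlast⟩
            refine ⟨hli, fun i => ?_⟩
            induction i using Fin.lastCases with
            | last => rw [Fin.snoc_last]; exact hlast
            | cast i' => rw [Fin.snoc_castSucc]; exact hfirst i'
          · rintro ⟨hli, hall⟩
            refine ⟨⟨hli, fun i => ?_⟩, ?_⟩
            · have := hall (Fin.castSucc i)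
              rwa [Fin.snoc_castSucc] at this
            · have := hall (Fin.last j)
              rwa [Fin.snoc_last] at this
      rw [Nat.card_congr e, ih (j+1) (by omega) _ hsnoc]
    rw [Finset.sum_congr rfl (fun x _ => hfib x), Finset.sum_const, Finset.card_univ,
      smul_eq_mul]
    have hC : Fintype.card C = Fintype.card F ^ n - Fintype.card F ^ j := by
      rw [Fintype.card_compl_set,
        Module.card_eq_pow_finrank (K := F) (V := (Submodule.span F (Set.range w) : Set (Fin n → F)))]
      simp only [SetLike.coe_sort_coe, finrank_span_eq_card hw, Fintype.card_fin]
      rw [Module.card_eq_pow_finrank (K := F) (V := Fin n → F), Module.finrank_fin_fun]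
    rw [hC, Finset.prod_range_succ', mul_comm, Nat.add_zero]
    congr 1
    exact Finset.prod_congr rfl fun m _ => by rw [show j + 1 + m = j + (m + 1) by omega]


private lemma hnum_aux (n j d : ℕ) (h : j + d = n) :
    n * (n - 1) - j * (j - 1) = 2 * (d * j) + d * (d - 1) := by
  subst h
  rcases j with _ | j <;> rcases d with _ | d
  · simp
  · simp [Nat.succ_sub_one]
  · simp
  · apply Nat.sub_eq_of_eq_add
    have h1 : j + 1 + (d + 1) - 1 = j + d + 1 := by omega
    rw [h1, Nat.succ_sub_one, Nat.succ_sub_one]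
    ring

private lemma arith_aux (q n j : ℕ) (hq : 1 < q) (d : ℕ) (hjd : j + d = n) :
    (q ^ ((n * (n - 1) - j * (j - 1)) / 2) *
        ∏ k ∈ Finset.Icc 1 d, (q ^ k - 1) / (q - 1)) * (q - 1) ^ d
      = ∏ m ∈ Finset.range d, (q ^ n - q ^ (j + m)) := by
  have h1 : ∀ m ∈ Finset.range d, q ^ n - q ^ (j + m) = q ^ (j + m) * (q ^ (d - m) - 1) := by
    intro m hm
    rw [Finset.mem_range] at hm
    rw [Nat.mul_sub, mul_one, ← pow_add]
    congr 2
    omega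
  rw [Finset.prod_congr rfl h1, Finset.prod_mul_distrib, Finset.prod_pow_eq_pow_sum]
  have hsum : ∑ m ∈ Finset.range d, (j + m) = (n * (n - 1) - j * (j - 1)) / 2 := by
    rw [Finset.sum_add_distrib, Finset.sum_const, Finset.card_range, smul_eq_mul,
      hnum_aux n j d hjd, ← Finset.sum_range_id_mul_two d]
    set s := ∑ i ∈ Finset.range d, i
    set P := d * j
    omega
  rw [hsum]
  have hrefl : ∏ m ∈ Finset.range d, (q ^ (d - m) - 1) = ∏ k ∈ Finset.Icc 1 d, (q ^ k - 1) := by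
    refine Finset.prod_nbij' (fun m => d - m) (fun k => d - k) ?_ ?_ ?_ ?_ ?_ <;>
      intro a ha <;> simp only [Finset.mem_range, Finset.mem_Icc] at ha ⊢ <;>
      first
      | omega
      | (congr 1; omega)
  rw [hrefl]
  have hIcc : (∏ k ∈ Finset.Icc 1 d, (q ^ k - 1) / (q - 1)) * (q - 1) ^ d
      = ∏ k ∈ Finset.Icc 1 d, (q ^ k - 1) := by
    rw [show (q - 1) ^ d = ∏ _k ∈ Finset.Icc 1 d, (q - 1) by
      rw [Finset.prod_const, Nat.card_Icc]; congr 1]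
    rw [← Finset.prod_mul_distrib]
    refine Finset.prod_congr rfl fun k _ => ?_
    exact Nat.div_mul_cancel (by simpa using Nat.sub_dvd_pow_sub_pow q 1 k)
  rw [mul_assoc, hIcc]

/-- Given a fixed linearly independent family of size `j` in `F^n`, the number of ordered
`n`-tuples of lines extending it to a basis of `F^n` is
`q^((n(n-1)-j(j-1))/2) ∏_{k=1}^{n-j} [k]_q`. -/
theorem card_ordered_bases_extending (q n j : ℕ) (hj : j ≤ n) (F : Type*) [Field F] [Fintype F]
    (hF : Fintype.card F = q) (w : Fin j → (Fin n → F))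
    (hw : LinearIndependent F w) (hw0 : ∀ i, w i ≠ 0) :
    Nat.card {b : Fin n → Projectivization F (Fin n → F) //
        (∀ i : Fin j, b (Fin.castLE hj i) = Projectivization.mk F (w i) (hw0 i)) ∧
        LinearIndependent F (fun i => (b i).rep)}
      = q ^ ((n * (n - 1) - j * (j - 1)) / 2) *
          ∏ k ∈ Finset.Icc 1 (n - j), (q ^ k - 1) / (q - 1) := by
  subst hF
  have hq : 1 < Fintype.card F := Fintype.one_lt_card
  obtain ⟨d, hjd⟩ : ∃ d, j + d = n := ⟨n - j, by omega⟩
  have hpos : 0 < Fintype.card F - 1 := by omega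
  have hdj : d + j = n := by omega
  rw [show n - j = d from by omega]
  have hA : Nat.card {v : Fin n → (Fin n → F) // LinearIndependent F v ∧
      ∀ i : Fin j, v (Fin.castLE hj i) = w i} =
      ∏ m ∈ Finset.range d, (Fintype.card F ^ n - Fintype.card F ^ (j + m)) :=
    card_vec_ext F n d j hjd w hw
  have hS := card_S_mul F n j hj w hw hw0
  rw [hA] at hS
  have harith := arith_aux (Fintype.card F) n j hq d hjd
  refine Nat.eq_of_mul_eq_mul_right (m := (Fintype.card F - 1) ^ d) (pow_pos hpos d) ?_
  rw [harith]
  refine Nat.eq_of_mul_eq_mul_right (m := (Fintype.card F - 1) ^ j) (pow_pos hpos j) ?_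
  rw [mul_assoc, ← pow_add, hdj]
  exact hS
end

section
/- The square of the incidence matrix A satisfies A² = Φ(N, [n-1]_q, [n-2]_q), i.e., the diagonal entries of A² equal (q^{n-1}-1)/(q-1) and all off-diagonal entries equal (q^{n-2}-1)/(q-1). -/
open Module

section Aux

variable {F : Type*} [Field F] {n : ℕ}

/-- The linear functional `x ↦ ∑ l, w l * x l`. -/
def dotL (w : Fin n → F) : (Fin n → F) →ₗ[F] F where
  toFun x := ∑ l, w l * x l
  map_add' x y := by simp [mul_add, Finset.sum_add_distrib]
  map_smul' c x := by
    simp only [Pi.smul_apply, smul_eq_mul, RingHom.id_apply, Finset.mul_sum]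
    exact Finset.sum_congr rfl fun l _ => by ring

@[simp] lemma dotL_apply (w x : Fin n → F) : dotL w x = ∑ l, w l * x l := rfl

lemma dotL_single (w : Fin n → F) (l : Fin n) : dotL w (Pi.single l 1) = w l := by
  classical
  simp [dotL_apply, Pi.single_apply]

lemma dotL_eq_zero (w : Fin n → F) (h : dotL w = 0) : w = 0 := by
  funext l
  have h2 := LinearMap.congr_fun h (Pi.single l 1)
  rw [dotL_single] at h2
  simpa using h2

lemma dotL_ne_zero (w : Fin n → F) (hw : w ≠ 0) : dotL w ≠ 0 :=
  fun h => hw (dotL_eq_zero w h)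

lemma range_eq_top_of_ne_zero {V : Type*} [AddCommGroup V] [Module F V]
    (f : V →ₗ[F] F) (h : f ≠ 0) : LinearMap.range f = ⊤ := by
  obtain ⟨x, hx⟩ : ∃ x, f x ≠ 0 := by
    by_contra hc; push_neg at hc; exact h (LinearMap.ext fun x => hc x)
  rw [eq_top_iff]
  intro a _
  refine ⟨(a / f x) • x, ?_⟩
  rw [map_smul, smul_eq_mul, div_mul_cancel₀ _ hx]

lemma finrank_ker_dotL (w : Fin n → F) (hw : w ≠ 0) :
    finrank F (LinearMap.ker (dotL w)) = n - 1 := by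
  have hr : LinearMap.range (dotL w) = ⊤ := range_eq_top_of_ne_zero _ (dotL_ne_zero w hw)
  have h2 := LinearMap.finrank_range_add_finrank_ker (dotL w)
  rw [hr, finrank_top, Module.finrank_self, Module.finrank_fin_fun] at h2
  omega

lemma exists_smul_of_ker_le_ker (w w' : Fin n → F) (hw : w ≠ 0)
    (h : LinearMap.ker (dotL w) ≤ LinearMap.ker (dotL w')) :
    ∃ c : F, w' = c • w := by
  obtain ⟨x, hx⟩ : ∃ x, dotL w x ≠ 0 := by
    by_contra hc; push_neg at hc
    exact dotL_ne_zero w hw (LinearMap.ext fun x => hc x)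
  set x0 : Fin n → F := (dotL w x)⁻¹ • x with hx0
  have hwx0 : dotL w x0 = 1 := by
    rw [hx0, map_smul, smul_eq_mul, inv_mul_cancel₀ hx]
  set c : F := dotL w' x0 with hc
  refine ⟨c, ?_⟩
  have key : ∀ y, dotL w' y = c * dotL w y := by
    intro y
    have hker : y - (dotL w y) • x0 ∈ LinearMap.ker (dotL w) := by
      simp [LinearMap.mem_ker, map_sub, map_smul, hwx0]
    have := h hker
    rw [LinearMap.mem_ker, map_sub, map_smul, sub_eq_zero] at this
    rw [this, smul_eq_mul, ← hc]; ring
  funext l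
  have := key (Pi.single l 1)
  rw [dotL_single, dotL_single] at this
  simpa using this

/-- Counting lines in a subspace: the number of indices `k` with `v k ∈ W`
times `q - 1` equals `q ^ dim W - 1`. -/
lemma count_in_subspace {N q : ℕ} [Fintype F] (hF : Fintype.card F = q)
    (v : Fin N → (Fin n → F)) (hv0 : ∀ i, v i ≠ 0)
    (hvinj : ∀ i j, Submodule.span F {v i} = Submodule.span F {v j} → i = j)
    (hvcov : ∀ w : Fin n → F, w ≠ 0 → ∃ i, w ∈ Submodule.span F {v i})
    (W : Submodule F (Fin n → F)) :
    (q - 1) * Nat.card {k // v k ∈ W} = q ^ finrank F W - 1 := by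
  classical
  have hbij : {c : F // c ≠ 0} × {k // v k ∈ W} ≃ {x : W // x ≠ 0} := by
    refine Equiv.ofBijective
      (fun p => ⟨⟨p.1.1 • v p.2.1, W.smul_mem _ p.2.2⟩, ?_⟩) ⟨?_, ?_⟩
    · intro hzero
      rw [Submodule.mk_eq_zero] at hzero
      exact smul_ne_zero p.1.2 (hv0 p.2.1) hzero
    · rintro ⟨⟨c, hc⟩, ⟨k, hk⟩⟩ ⟨⟨c', hc'⟩, ⟨k', hk'⟩⟩ heq
      have heq' : c • v k = c' • v k' := by
        simpa using congrArg (fun z : {x : W // x ≠ 0} => (z.1 : Fin n → F)) heq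
      have hspan : Submodule.span F {v k} = Submodule.span F {v k'} := by
        rw [← Submodule.span_singleton_smul_eq (isUnit_iff_ne_zero.mpr hc) (v k), heq',
          Submodule.span_singleton_smul_eq (isUnit_iff_ne_zero.mpr hc') (v k')]
      have hkk : k = k' := hvinj k k' hspan
      subst hkk
      have hcc : (c - c') • v k = 0 := by rw [sub_smul, heq', sub_self]
      rcases smul_eq_zero.mp hcc with h | h
      · have hcc' : c = c' := sub_eq_zero.mp h
        subst hcc'
        rfl
      · exact absurd h (hv0 k)
    · rintro ⟨⟨x, hxW⟩, hx0⟩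
      have hxne : x ≠ 0 := by
        intro h; apply hx0; exact Subtype.ext h
      obtain ⟨i, hi⟩ := hvcov x hxne
      obtain ⟨a, ha⟩ := Submodule.mem_span_singleton.mp hi
      have hane : a ≠ 0 := by
        intro h; apply hxne; rw [← ha, h, zero_smul]
      have hviW : v i ∈ W := by
        have : v i = a⁻¹ • x := by rw [← ha, smul_smul, inv_mul_cancel₀ hane, one_smul]
        rw [this]; exact W.smul_mem _ hxW
      exact ⟨⟨⟨a, hane⟩, ⟨i, hviW⟩⟩, by
        apply Subtype.ext; apply Subtype.ext; exact ha⟩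
  have hcard1 : Nat.card {c : F // c ≠ 0} = q - 1 := by
    rw [← Nat.card_congr (unitsEquivNeZero (G₀ := F)), Nat.card_units,
      Nat.card_eq_fintype_card, hF]
  have hcard2 : Nat.card {x : W // x ≠ 0} = q ^ finrank F W - 1 := by
    have hsplit : Nat.card {x : W // x = 0} + Nat.card {x : W // x ≠ 0} = Nat.card W := by
      rw [← Nat.card_sum]
      exact Nat.card_congr (Equiv.sumCompl (· = (0 : W)))
    have h0 : Nat.card {x : W // x = 0} = 1 := by
      rw [Nat.card_eq_fintype_card]
      exact Fintype.card_subtype_eq (0 : W)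
    have hWcard : Nat.card W = q ^ finrank F W := by
      rw [Nat.card_eq_fintype_card, card_eq_pow_finrank (K := F) (V := W), hF]
    omega
  calc (q - 1) * Nat.card {k // v k ∈ W}
      = Nat.card ({c : F // c ≠ 0} × {k // v k ∈ W}) := by
        rw [Nat.card_prod, hcard1]
    _ = Nat.card {x : W // x ≠ 0} := Nat.card_congr hbij
    _ = q ^ finrank F W - 1 := hcard2

end Aux

theorem incidence_sq (q n N : ℕ) (hq : 2 ≤ q) (hn : 2 ≤ n)
    (F : Type*) [Field F] [Fintype F] [DecidableEq F] (hF : Fintype.card F = q)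
    (hN : N = (q ^ n - 1) / (q - 1))
    (v : Fin N → (Fin n → F))
    (hv0 : ∀ i, v i ≠ 0)
    (hvinj : ∀ i j, Submodule.span F {v i} = Submodule.span F {v j} → i = j)
    (hvcov : ∀ w : Fin n → F, w ≠ 0 → ∃ i, w ∈ Submodule.span F {v i})
    (A : Matrix (Fin N) (Fin N) ℤ)
    (hA : ∀ i j, A i j = if ∑ k, v i k * v j k = 0 then 1 else 0)
    :
    ∀ i j : Fin N, (A * A) i j = if i = j then (((q ^ (n - 1) - 1) / (q - 1) : ℕ) : ℤ) else (((q ^ (n - 2) - 1) / (q - 1) : ℕ) : ℤ) := by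
  classical
  intro i j
  set W : Submodule F (Fin n → F) :=
    LinearMap.ker (dotL (v i)) ⊓ LinearMap.ker (dotL (v j)) with hW
  have key : (A * A) i j = (Nat.card {k // v k ∈ W} : ℤ) := by
    rw [Matrix.mul_apply]
    have hterm : ∀ k, A i k * A k j = if v k ∈ W then 1 else 0 := by
      intro k
      rw [hA i k, hA k j]
      have h1 : (∑ l, v k l * v j l) = ∑ l, v j l * v k l :=
        Finset.sum_congr rfl (fun l _ => mul_comm _ _)
      rw [h1]
      have hmem : v k ∈ W ↔ ((∑ l, v i l * v k l) = 0 ∧ (∑ l, v j l * v k l) = 0) := by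
        rw [hW, Submodule.mem_inf, LinearMap.mem_ker, LinearMap.mem_ker, dotL_apply, dotL_apply]
      by_cases h2 : (∑ l, v i l * v k l) = 0 <;>
        by_cases h3 : (∑ l, v j l * v k l) = 0 <;>
        simp [h2, h3, hmem]
    rw [Finset.sum_congr rfl (fun k _ => hterm k)]
    rw [Finset.sum_boole, Nat.card_eq_fintype_card, Fintype.card_subtype]
  have hdiv : ∀ d : ℕ, (q - 1) * Nat.card {k // v k ∈ W} = q ^ d - 1 →
      Nat.card {k // v k ∈ W} = (q ^ d - 1) / (q - 1) := by
    intro d h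
    rw [← h, Nat.mul_div_cancel_left _ (by omega)]
  by_cases hij : i = j
  · subst hij
    have hWk : W = LinearMap.ker (dotL (v i)) := by rw [hW, inf_idem]
    have hfr : finrank F W = n - 1 := by rw [hWk]; exact finrank_ker_dotL (v i) (hv0 i)
    have hcount := count_in_subspace hF v hv0 hvinj hvcov W
    rw [hfr] at hcount
    rw [if_pos rfl, key, hdiv (n - 1) hcount]
  · have hK : finrank F (LinearMap.ker (dotL (v i))) = n - 1 :=
      finrank_ker_dotL (v i) (hv0 i)
    set K := LinearMap.ker (dotL (v i)) with hKdef
    set h : K →ₗ[F] F := (dotL (v j)).domRestrict K with hhdef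
    have hne : h ≠ 0 := by
      intro hz
      have hle : K ≤ LinearMap.ker (dotL (v j)) := by
        intro x hx
        have := LinearMap.congr_fun hz ⟨x, hx⟩
        simpa [hhdef, LinearMap.domRestrict_apply] using this
      obtain ⟨c, hc⟩ := exists_smul_of_ker_le_ker (v i) (v j) (hv0 i) hle
      have hcne : c ≠ 0 := by
        intro h0; apply hv0 j; rw [hc, h0, zero_smul]
      have hspan : Submodule.span F {v j} = Submodule.span F {v i} := by
        rw [hc]; exact Submodule.span_singleton_smul_eq (isUnit_iff_ne_zero.mpr hcne) _
      exact hij (hvinj i j hspan.symm)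
    have hrange : LinearMap.range h = ⊤ := range_eq_top_of_ne_zero _ hne
    have h2 := LinearMap.finrank_range_add_finrank_ker h
    rw [hrange, finrank_top, Module.finrank_self, hK] at h2
    have hWk : W = Submodule.map K.subtype (LinearMap.ker h) := by
      rw [hhdef, LinearMap.ker_domRestrict, Submodule.map_comap_subtype]
    have hfr : finrank F W = n - 2 := by
      rw [hWk, Submodule.finrank_map_subtype_eq]
      omega
    have hcount := count_in_subspace hF v hv0 hvinj hvcov W
    rw [hfr] at hcount
    rw [if_neg hij, key, hdiv (n - 2) hcount]
end

section
/- The product AB of the incidence matrix A and the non-incidence matrix B equals Φ(N, 0, q^{n-2}): AB has zero diagonal and all off-diagonal entries equal to q^{n-2}. -/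
open Module LinearMap Finset

private lemma aux_finrank_ker {F V : Type*} [Field F] [AddCommGroup V] [Module F V]
    [FiniteDimensional F V] (f : V →ₗ[F] F) (hf : f ≠ 0) :
    Module.finrank F (LinearMap.ker f) = Module.finrank F V - 1 := by
  have hr : LinearMap.range f = ⊤ := by
    rcases Ideal.eq_bot_or_top (LinearMap.range f) with h | h
    · exact absurd (LinearMap.range_eq_bot.mp h) hf
    · exact h
  have := LinearMap.finrank_range_add_finrank_ker f
  rw [hr, finrank_top, Module.finrank_self] at this
  omega

private lemma aux_card_submodule {F V : Type*} [Field F] [Fintype F] [AddCommGroup V]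
    [Module F V] [Fintype V] (p : Submodule F V) :
    Nat.card ↥p = Fintype.card F ^ Module.finrank F ↥p := by
  classical
  haveI : Fintype ↥p := Fintype.ofFinite _
  rw [Nat.card_eq_fintype_card, card_eq_pow_finrank (K := F)]

private lemma aux_scalar {F V : Type*} [Field F] [AddCommGroup V] [Module F V]
    (f g : V →ₗ[F] F) (hf : f ≠ 0)
    (h : ∀ w, f w = 0 → g w = 0) : ∃ c : F, g = c • f := by
  obtain ⟨u, hu⟩ : ∃ u, f u ≠ 0 := by
    by_contra h0
    push_neg at h0
    exact hf (LinearMap.ext fun w => by simp [h0])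
  refine ⟨g u / f u, LinearMap.ext fun w => ?_⟩
  have h1 : f (w - (f w / f u) • u) = 0 := by
    simp only [map_sub, map_smul, smul_eq_mul]
    field_simp
    ring
  have h2 := h _ h1
  simp only [map_sub, map_smul, smul_eq_mul] at h2
  have : g w = f w / f u * g u := sub_eq_zero.mp h2
  rw [this]
  simp [smul_eq_mul]
  ring

theorem incidence_mul_nonincidence (q n N : ℕ) (hq : 2 ≤ q) (hn : 2 ≤ n)
    (F : Type*) [Field F] [Fintype F] [DecidableEq F] (hF : Fintype.card F = q)
    (hN : N = (q ^ n - 1) / (q - 1))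
    (v : Fin N → (Fin n → F))
    (hv0 : ∀ i, v i ≠ 0)
    (hvinj : ∀ i j, Submodule.span F {v i} = Submodule.span F {v j} → i = j)
    (hvcov : ∀ w : Fin n → F, w ≠ 0 → ∃ i, w ∈ Submodule.span F {v i})
    (A : Matrix (Fin N) (Fin N) ℤ)
    (hA : ∀ i j, A i j = if ∑ k, v i k * v j k = 0 then 1 else 0)
    (B : Matrix (Fin N) (Fin N) ℤ) (hB : ∀ i j, B i j = 1 - A i j):
    ∀ i j : Fin N, (A * B) i j = if i = j then 0 else ((q ^ (n - 2) : ℕ) : ℤ) := by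
  classical
  intro i j
  rw [Matrix.mul_apply]
  by_cases hij : i = j
  · subst hij
    rw [if_pos rfl]
    apply Finset.sum_eq_zero
    intro k _
    rw [hA, hB, hA]
    have hsym : ∑ m, v k m * v i m = ∑ m, v i m * v k m :=
      Finset.sum_congr rfl fun m _ => mul_comm _ _
    rw [hsym]
    split_ifs <;> ring
  · rw [if_neg hij]
    -- linear functionals
    set li : (Fin n → F) →ₗ[F] F :=
      { toFun := fun w => ∑ m, v i m * w m
        map_add' := fun x y => by simp [mul_add, Finset.sum_add_distrib]
        map_smul' := fun c x => by simp [Finset.mul_sum, mul_left_comm] } with hli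
    set lj : (Fin n → F) →ₗ[F] F :=
      { toFun := fun w => ∑ m, w m * v j m
        map_add' := fun x y => by simp [add_mul, Finset.sum_add_distrib]
        map_smul' := fun c x => by simp [Finset.mul_sum, mul_assoc] } with hlj
    have hli_single : ∀ (u : Fin n → F) m, (∑ m', u m' * (Pi.single m 1 : Fin n → F) m') = u m := by
      intro u m
      simp [Pi.single_apply, mul_ite, Finset.sum_ite_eq']
    have hli_apply : ∀ w, li w = ∑ m, v i m * w m := fun w => rfl
    have hlj_apply : ∀ w, lj w = ∑ m, w m * v j m := fun w => rfl
    have hli0 : li ≠ 0 := by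
      obtain ⟨m, hm⟩ := Function.ne_iff.mp (hv0 i)
      intro h
      apply hm
      have h1 : li (Pi.single m 1) = v i m := by
        rw [hli_apply]
        simp [Pi.single_apply, mul_ite, Finset.sum_ite_eq']
      rw [h] at h1
      simpa using h1.symm
    have hlj0 : lj ≠ 0 := by
      obtain ⟨m, hm⟩ := Function.ne_iff.mp (hv0 j)
      intro h
      apply hm
      have : lj (Pi.single m 1) = v j m := by
        rw [hlj_apply]
        simp [Pi.single_apply, ite_mul, Finset.sum_ite_eq']
      rw [h] at this
      simpa using this.symm
    -- key: exists w with li w = 0 and lj w ≠ 0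
    have hkey : ∃ w, li w = 0 ∧ lj w ≠ 0 := by
      by_contra hc
      push_neg at hc
      obtain ⟨c, hcf⟩ := aux_scalar li lj hli0 hc
      have hc0 : c ≠ 0 := by
        rintro rfl
        simp at hcf
        exact hlj0 hcf
      have hvj : v j = c • v i := by
        funext m
        have h1 : lj (Pi.single m 1) = v j m := by
          rw [hlj_apply]; simp [Pi.single_apply, ite_mul, Finset.sum_ite_eq']
        have h2 : li (Pi.single m 1) = v i m := by
          rw [hli_apply]; simp [Pi.single_apply, mul_ite, Finset.sum_ite_eq']
        have := congrFun (congrArg (fun f : (Fin n → F) →ₗ[F] F => (f : (Fin n → F) → F)) hcf)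
          (Pi.single m 1)
        simp only [LinearMap.smul_apply, smul_eq_mul] at this
        rw [h1, h2] at this
        simpa using this
      apply hij
      apply hvinj
      rw [hvj]
      exact (Submodule.span_singleton_smul_eq (isUnit_iff_ne_zero.mpr hc0) _).symm
    -- the Finsets
    set S : Finset (Fin N) := univ.filter (fun k => li (v k) = 0 ∧ lj (v k) ≠ 0) with hS
    set T : Finset (Fin n → F) := univ.filter (fun w => li w = 0 ∧ lj w ≠ 0) with hT
    -- matrix entry equals S.card
    have hentry : ∑ k, A i k * B k j = (S.card : ℤ) := by
      have : ∀ k, A i k * B k j = if li (v k) = 0 ∧ lj (v k) ≠ 0 then (1 : ℤ) else 0 := by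
        intro k
        rw [hA, hB, hA]
        rw [show (∑ m, v i m * v k m) = li (v k) from rfl,
          show (∑ m, v k m * v j m) = lj (v k) from rfl]
        by_cases h1 : li (v k) = 0 <;> by_cases h2 : lj (v k) = 0 <;> simp [h1, h2]
      rw [Finset.sum_congr rfl fun k _ => this k, Finset.sum_boole]
    rw [hentry]
    -- FiniteDimensional instance
    haveI : FiniteDimensional F (Fin n → F) := inferInstance
    have hfr : Module.finrank F (Fin n → F) = n := Module.finrank_fin_fun F
    -- card of ker li
    have c1 : (univ.filter (fun w : Fin n → F => li w = 0)).card = q ^ (n - 1) := by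
      have e1 : (univ.filter (fun w : Fin n → F => li w = 0)).card
          = Nat.card ↥(LinearMap.ker li) := by
        rw [Nat.card_eq_fintype_card, Fintype.card_subtype]
        congr 1
        ext w
        simp [LinearMap.mem_ker]
      rw [e1, aux_card_submodule, aux_finrank_ker li hli0, hF, hfr]
    -- card of ker li ⊓ ker lj
    set K := LinearMap.ker li with hK
    set f' : ↥K →ₗ[F] F := lj.comp K.subtype with hf'
    have hf'0 : f' ≠ 0 := by
      obtain ⟨w, hw1, hw2⟩ := hkey
      intro h
      apply hw2
      have : f' ⟨w, LinearMap.mem_ker.mpr hw1⟩ = 0 := by rw [h]; rfl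
      exact this
    have hfrK : Module.finrank F ↥K = n - 1 := by
      rw [hK, aux_finrank_ker li hli0, hfr]
    have c2 : (univ.filter (fun w : Fin n → F => li w = 0 ∧ lj w = 0)).card = q ^ (n - 2) := by
      have e : ↥(LinearMap.ker f') ≃ {w : Fin n → F // li w = 0 ∧ lj w = 0} :=
        { toFun := fun x => ⟨x.1.1, x.1.2, LinearMap.mem_ker.mp x.2⟩
          invFun := fun w => ⟨⟨w.1, LinearMap.mem_ker.mpr w.2.1⟩,
            LinearMap.mem_ker.mpr w.2.2⟩
          left_inv := fun x => by ext; rfl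
          right_inv := fun w => by ext; rfl }
      have e2 : (univ.filter (fun w : Fin n → F => li w = 0 ∧ lj w = 0)).card
          = Nat.card ↥(LinearMap.ker f') :=
        calc (univ.filter (fun w : Fin n → F => li w = 0 ∧ lj w = 0)).card
            = Fintype.card {w : Fin n → F // li w = 0 ∧ lj w = 0} :=
              (Fintype.card_subtype _).symm
          _ = Nat.card {w : Fin n → F // li w = 0 ∧ lj w = 0} :=
              Nat.card_eq_fintype_card.symm
          _ = Nat.card ↥(LinearMap.ker f') := (Nat.card_congr e).symm
      rw [e2, aux_card_submodule, aux_finrank_ker f' hf'0, hF, hfrK]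
      congr 1
    -- card of T
    have cT : T.card = q ^ (n - 2) * (q - 1) := by
      have hTsub : (univ.filter (fun w : Fin n → F => li w = 0 ∧ lj w = 0))
          ⊆ (univ.filter (fun w : Fin n → F => li w = 0)) := by
        intro w hw
        simp only [Finset.mem_filter] at *
        exact ⟨hw.1, hw.2.1⟩
      have hTeq : T = (univ.filter (fun w : Fin n → F => li w = 0))
          \ (univ.filter (fun w : Fin n → F => li w = 0 ∧ lj w = 0)) := by
        ext w
        simp only [hT, Finset.mem_filter, Finset.mem_sdiff, Finset.mem_univ, true_and]
        tauto
      rw [hTeq, Finset.card_sdiff_of_subset hTsub, c1, c2]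
      have hn1 : n - 1 = (n - 2) + 1 := by omega
      rw [hn1, pow_succ, Nat.mul_sub, mul_one]
    -- the fibration map
    set g : (Fin n → F) → Fin N := fun w =>
      if h : w ≠ 0 then (hvcov w h).choose else i with hg
    have hgmem : ∀ w (h : w ≠ 0), w ∈ Submodule.span F {v (g w)} := by
      intro w h
      rw [hg]
      simp only [dif_pos h]
      exact (hvcov w h).choose_spec
    have hspan : ∀ (u : Fin n → F) k, u ≠ 0 → u ∈ Submodule.span F {v k} →
        Submodule.span F {u} = Submodule.span F {v k} := by
      intro u k hu hm
      obtain ⟨c, hc⟩ := Submodule.mem_span_singleton.mp hm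
      have hc0 : c ≠ 0 := by rintro rfl; simp at hc; exact hu hc.symm
      rw [← hc]
      exact Submodule.span_singleton_smul_eq (isUnit_iff_ne_zero.mpr hc0) _
    have huniq : ∀ w (hw : w ≠ 0) k, w ∈ Submodule.span F {v k} → g w = k := by
      intro w hw k hk
      exact hvinj _ _ (((hspan w (g w) hw (hgmem w hw)).symm).trans (hspan w k hw hk))
    have hTne : ∀ w ∈ T, w ≠ 0 := by
      intro w hw
      rintro rfl
      have := (Finset.mem_filter.mp hw).2.2
      simp at this
    -- g maps T into S
    have hgS : ∀ w ∈ T, g w ∈ S := by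
      intro w hw
      obtain ⟨-, hw1, hw2⟩ := Finset.mem_filter.mp hw
      have hwne := hTne w hw
      obtain ⟨c, hc⟩ := Submodule.mem_span_singleton.mp (hgmem w hwne)
      have hc0 : c ≠ 0 := by rintro rfl; simp at hc; exact hwne hc.symm
      rw [Finset.mem_filter]
      refine ⟨Finset.mem_univ _, ?_, ?_⟩
      · have hlw : li w = c * li (v (g w)) := by
          conv_lhs => rw [← hc]
          simp
        rw [hw1] at hlw
        exact (mul_eq_zero.mp hlw.symm).resolve_left hc0
      · intro h0
        apply hw2
        conv_lhs => rw [← hc]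
        simp [h0]
    -- fibers have cardinality q - 1
    have hfiber : ∀ k ∈ S, (T.filter (fun w => g w = k)).card = q - 1 := by
      intro k hk
      obtain ⟨-, hk1, hk2⟩ := Finset.mem_filter.mp hk
      have himg : T.filter (fun w => g w = k)
          = (univ.erase (0 : F)).image (fun c => c • v k) := by
        ext w
        simp only [Finset.mem_filter, Finset.mem_image, Finset.mem_erase, Finset.mem_univ,
          and_true, hT, true_and]
        constructor
        · rintro ⟨⟨hw1, hw2⟩, hgw⟩
          have hwne : w ≠ 0 := by rintro rfl; simp at hw2
          obtain ⟨c, hc⟩ := Submodule.mem_span_singleton.mp (hgw ▸ hgmem w hwne)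
          have hc0 : c ≠ 0 := by rintro rfl; simp at hc; exact hwne hc.symm
          exact ⟨c, hc0, hc⟩
        · rintro ⟨c, hc0, rfl⟩
          have hwne : c • v k ≠ 0 := smul_ne_zero hc0 (hv0 k)
          refine ⟨⟨?_, ?_⟩, ?_⟩
          · simp [hk1]
          · simp only [map_smul, smul_eq_mul, hk1]
            exact fun h => hk2 ((mul_eq_zero.mp h).resolve_left hc0)
          · exact huniq _ hwne k (Submodule.mem_span_singleton.mpr ⟨c, rfl⟩)
      rw [himg, Finset.card_image_of_injective _ (smul_left_injective F (hv0 k)),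
        Finset.card_erase_of_mem (Finset.mem_univ _), Finset.card_univ, hF]
    -- count
    have hcount : T.card = S.card * (q - 1) := by
      rw [Finset.card_eq_sum_card_fiberwise hgS]
      rw [Finset.sum_congr rfl hfiber]
      simp [mul_comm]
    have hScard : S.card = q ^ (n - 2) := by
      have h1 : S.card * (q - 1) = q ^ (n - 2) * (q - 1) := by rw [← hcount, cT]
      have h2 : 0 < q - 1 := by omega
      exact Nat.eq_of_mul_eq_mul_right h2 h1
    rw [hScard]
end

section
/- det(B²) = q^{(n-2)N + n}, where B is the non-incidence matrix between lines and hyperplanes of F^n and N = (q^n-1)/(q-1). -/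
set_option linter.unusedSectionVars false
set_option maxHeartbeats 1000000

open Finset Matrix Module

section DetBHelpers

lemma detB_card_ne_gen {α : Type*} [Fintype α] [DecidableEq α] (a : α) :
    Fintype.card {x : α // x ≠ a} = Fintype.card α - 1 := by
  simp only [ne_eq, Fintype.card_subtype_compl, Fintype.card_subtype_eq]

variable {F : Type*} [Field F] [Fintype F] [DecidableEq F] {n N : ℕ}

/-- the linear functional `w ↦ ∑ k, w k * u k` -/
def detB_phi (u : Fin n → F) : (Fin n → F) →ₗ[F] F where
  toFun w := ∑ k, w k * u k
  map_add' a b := by simp [add_mul, Finset.sum_add_distrib]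
  map_smul' c a := by simp [Finset.mul_sum, mul_assoc]

lemma detB_phi_surj {u : Fin n → F} (hu : u ≠ 0) : Function.Surjective (detB_phi u) := by
  obtain ⟨k, hk⟩ : ∃ k, u k ≠ 0 := by
    by_contra h; push_neg at h; exact hu (funext fun k => h k)
  intro a
  refine ⟨Pi.single k (a * (u k)⁻¹), ?_⟩
  simp only [detB_phi, LinearMap.coe_mk, AddHom.coe_mk]
  rw [Finset.sum_eq_single k]
  · simp only [Pi.single_eq_same]; field_simp
  · intro b _ hb; simp [Pi.single_eq_of_ne hb]
  · simp

lemma detB_finrank_ker_phi {u : Fin n → F} (hu : u ≠ 0) :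
    finrank F (LinearMap.ker (detB_phi u)) = n - 1 := by
  have h := LinearMap.finrank_range_add_finrank_ker (detB_phi u)
  rw [LinearMap.range_eq_top.mpr (detB_phi_surj hu)] at h
  simp only [finrank_top, finrank_self, Module.finrank_fin_fun] at h
  omega

lemma detB_card_ker_phi {u : Fin n → F} (hu : u ≠ 0) :
    Nat.card {w : Fin n → F // ∑ k, w k * u k = 0} = Fintype.card F ^ (n - 1) := by
  have e : {w : Fin n → F // ∑ k, w k * u k = 0} ≃ LinearMap.ker (detB_phi u) :=
    Equiv.subtypeEquivRight (by intro w; simp [detB_phi, LinearMap.mem_ker])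
  have : Fintype (LinearMap.ker (detB_phi u)) := Fintype.ofFinite _
  rw [Nat.card_congr e, Nat.card_eq_fintype_card]
  rw [card_eq_pow_finrank (K := F), detB_finrank_ker_phi hu]

lemma detB_proportional {V : Type*} [AddCommGroup V] [Module F V]
    (f g : V →ₗ[F] F) (hf : f ≠ 0) (h : LinearMap.ker f = LinearMap.ker g) :
    ∃ c : F, g = c • f := by
  obtain ⟨x, hx⟩ : ∃ x, f x ≠ 0 := by
    by_contra hc; push_neg at hc; exact hf (LinearMap.ext fun x => hc x)
  refine ⟨g x / f x, LinearMap.ext fun y => ?_⟩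
  have hy : f (y - (f y / f x) • x) = 0 := by
    simp only [map_sub, LinearMap.map_smul, smul_eq_mul]
    field_simp
    ring
  rw [← LinearMap.mem_ker, h, LinearMap.mem_ker] at hy
  simp only [map_sub, LinearMap.map_smul, smul_eq_mul, sub_eq_zero] at hy
  simp only [LinearMap.smul_apply, smul_eq_mul]
  rw [hy]; field_simp

lemma detB_phi_apply_single (u : Fin n → F) (k : Fin n) :
    detB_phi u (Pi.single k 1) = u k := by
  simp only [detB_phi, LinearMap.coe_mk, AddHom.coe_mk]
  rw [Finset.sum_eq_single k]
  · simp
  · intro b _ hb; simp [Pi.single_eq_of_ne hb]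
  · simp

lemma detB_ker_ne {u u' : Fin n → F} (hu : u ≠ 0) (hu' : u' ≠ 0)
    (hs : Submodule.span F {u} ≠ Submodule.span F {u'}) :
    LinearMap.ker (detB_phi u) ≠ LinearMap.ker (detB_phi u') := by
  intro h
  have hfne : detB_phi u ≠ 0 := by
    intro hz
    obtain ⟨k, hk⟩ : ∃ k, u k ≠ 0 := by
      by_contra hc; push_neg at hc; exact hu (funext fun k => hc k)
    have := detB_phi_apply_single u k
    rw [hz] at this; simp at this; exact hk this.symm
  obtain ⟨c, hc⟩ := detB_proportional (detB_phi u) (detB_phi u') hfne h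
  have hcu : u' = c • u := by
    funext k
    have := detB_phi_apply_single u' k
    rw [hc] at this
    simpa [detB_phi_apply_single] using this.symm
  have hc0 : c ≠ 0 := by rintro rfl; simp at hcu; exact hu' hcu
  apply hs
  rw [hcu, ← Submodule.span_singleton_smul_eq (isUnit_iff_ne_zero.mpr hc0) u]

lemma detB_card_ker_pair (hn : 2 ≤ n) {u u' : Fin n → F} (hu : u ≠ 0) (hu' : u' ≠ 0)
    (hs : Submodule.span F {u} ≠ Submodule.span F {u'}) :
    Nat.card {w : Fin n → F // ∑ k, w k * u k = 0 ∧ ∑ k, w k * u' k = 0}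
      = Fintype.card F ^ (n - 2) := by
  set K1 := LinearMap.ker (detB_phi u)
  set K2 := LinearMap.ker (detB_phi u')
  have hK1 : finrank F K1 = n - 1 := detB_finrank_ker_phi hu
  have hK2 : finrank F K2 = n - 1 := detB_finrank_ker_phi hu'
  have hne : K1 ≠ K2 := detB_ker_ne hu hu' hs
  have hlt : K1 < K1 ⊔ K2 := by
    rcases lt_or_eq_of_le (le_sup_left : K1 ≤ K1 ⊔ K2) with h | h
    · exact h
    · exfalso
      have h2 : K2 ≤ K1 := by rw [h]; exact le_sup_right
      exact hne (Submodule.eq_of_le_of_finrank_le h2 (by omega)).symm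
  have hsup : finrank F ↥(K1 ⊔ K2) = n := by
    have h1 : finrank F K1 < finrank F ↥(K1 ⊔ K2) := Submodule.finrank_lt_finrank_of_lt hlt
    have h2 : finrank F ↥(K1 ⊔ K2) ≤ finrank F (Fin n → F) := Submodule.finrank_le _
    rw [Module.finrank_fin_fun] at h2
    omega
  have hinf : finrank F ↥(K1 ⊓ K2) = n - 2 := by
    have := Submodule.finrank_sup_add_finrank_inf_eq K1 K2
    omega
  have e : {w : Fin n → F // ∑ k, w k * u k = 0 ∧ ∑ k, w k * u' k = 0} ≃ ↥(K1 ⊓ K2) :=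
    Equiv.subtypeEquivRight (by
      intro w
      simp [K1, K2, Submodule.mem_inf, LinearMap.mem_ker, detB_phi])
  have : Fintype ↥(K1 ⊓ K2) := Fintype.ofFinite _
  rw [Nat.card_congr e, Nat.card_eq_fintype_card, card_eq_pow_finrank (K := F), hinf]

lemma detB_count_key (v : Fin N → (Fin n → F))
    (hv0 : ∀ i, v i ≠ 0)
    (hvinj : ∀ i j, Submodule.span F {v i} = Submodule.span F {v j} → i = j)
    (hvcov : ∀ w : Fin n → F, w ≠ 0 → ∃ i, w ∈ Submodule.span F {v i})
    (P : (Fin n → F) → Prop) [DecidablePred P]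
    (hP : ∀ (c : F) (w : Fin n → F), c ≠ 0 → (P (c • w) ↔ P w)) :
    (Fintype.card F - 1) * Nat.card {i : Fin N // P (v i)}
      = Nat.card {w : Fin n → F // w ≠ 0 ∧ P w} := by
  have hbij : Function.Bijective
      (fun p : {c : F // c ≠ 0} × {i : Fin N // P (v i)} =>
        (⟨p.1.1 • v p.2.1, by
          constructor
          · simp only [ne_eq, smul_eq_zero, not_or]
            exact ⟨p.1.2, hv0 p.2.1⟩
          · exact (hP p.1.1 (v p.2.1) p.1.2).mpr p.2.2⟩ :
          {w : Fin n → F // w ≠ 0 ∧ P w})) := by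
    constructor
    · rintro ⟨⟨c, hc⟩, ⟨i, hi⟩⟩ ⟨⟨c', hc'⟩, ⟨i', hi'⟩⟩ h
      simp only [Subtype.mk.injEq] at h
      have hii : i = i' := by
        apply hvinj
        rw [← Submodule.span_singleton_smul_eq (isUnit_iff_ne_zero.mpr hc) (v i),
          ← Submodule.span_singleton_smul_eq (isUnit_iff_ne_zero.mpr hc') (v i'), h]
      subst hii
      have hcc : c = c' := by
        by_contra hne
        have : (c - c') • v i = 0 := by rw [sub_smul, h, sub_self]
        rcases smul_eq_zero.mp this with h1 | h1
        · exact hne (sub_eq_zero.mp h1)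
        · exact hv0 i h1
      simp [hcc]
    · rintro ⟨w, hw, hPw⟩
      obtain ⟨i, hi⟩ := hvcov w hw
      rw [Submodule.mem_span_singleton] at hi
      obtain ⟨c, hc⟩ := hi
      have hc0 : c ≠ 0 := by rintro rfl; rw [zero_smul] at hc; exact hw hc.symm
      exact ⟨⟨⟨c, hc0⟩, ⟨i, (hP c (v i) hc0).mp (hc.symm ▸ hPw)⟩⟩, by simp [hc]⟩
  have := Nat.card_congr (Equiv.ofBijective _ hbij)
  rw [Nat.card_prod] at this
  rw [← this]
  congr 1
  rw [Nat.card_eq_fintype_card]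
  exact (detB_card_ne_gen (0 : F)).symm

lemma detB_card_and_ne (Q : (Fin n → F) → Prop) [DecidablePred Q] (h0 : Q 0) :
    Nat.card {w : Fin n → F // w ≠ 0 ∧ Q w} = Nat.card {w : Fin n → F // Q w} - 1 := by
  have e : {w : Fin n → F // w ≠ 0 ∧ Q w} ≃
      {x : {w : Fin n → F // Q w} // x ≠ ⟨0, h0⟩} :=
    { toFun := fun ⟨w, hw⟩ => ⟨⟨w, hw.2⟩, by simp [hw.1]⟩
      invFun := fun ⟨⟨w, hw⟩, hne⟩ => ⟨w, ⟨by simpa using hne, hw⟩⟩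
      left_inv := fun ⟨w, hw⟩ => rfl
      right_inv := fun ⟨⟨w, hw⟩, hne⟩ => rfl }
  rw [Nat.card_congr e, Nat.card_eq_fintype_card, Nat.card_eq_fintype_card, detB_card_ne_gen]

end DetBHelpers

theorem det_B_sq (q n N : ℕ) (hq : 2 ≤ q) (hn : 2 ≤ n)
    (F : Type*) [Field F] [Fintype F] [DecidableEq F] (hF : Fintype.card F = q)
    (hN : N = (q ^ n - 1) / (q - 1))
    (v : Fin N → (Fin n → F))
    (hv0 : ∀ i, v i ≠ 0)
    (hvinj : ∀ i j, Submodule.span F {v i} = Submodule.span F {v j} → i = j)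
    (hvcov : ∀ w : Fin n → F, w ≠ 0 → ∃ i, w ∈ Submodule.span F {v i})
    (A : Matrix (Fin N) (Fin N) ℤ)
    (hA : ∀ i j, A i j = if ∑ k, v i k * v j k = 0 then 1 else 0)
    (B : Matrix (Fin N) (Fin N) ℤ) (hB : ∀ i j, B i j = 1 - A i j):
    (B * B).det = ((q ^ ((n - 2) * N + n) : ℕ) : ℤ) := by
  classical
  have hq1Z : (2:ℤ) ≤ (q:ℤ) := by exact_mod_cast hq
  have hc : ((q:ℤ) - 1) ≠ 0 := by linarith
  have e1 : (q:ℤ)^n = (q:ℤ)^(n-2) * (q:ℤ)^2 := by rw [← pow_add]; congr 1; omega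
  have e2 : (q:ℤ)^(n-1) = (q:ℤ)^(n-2) * (q:ℤ) := by rw [← pow_succ]; congr 1; omega
  -- N * (q-1) = q^n - 1
  have hdvd : (q - 1) ∣ (q ^ n - 1) := by
    simpa using Nat.sub_dvd_pow_sub_pow q 1 n
  have hNnat : (q - 1) * N = q ^ n - 1 := by
    rw [hN, Nat.mul_div_cancel' hdvd]
  have hpow1 : 1 ≤ q ^ n := Nat.one_le_pow _ _ (by omega)
  have hNZ : ((q:ℤ) - 1) * (N:ℤ) = (q:ℤ)^n - 1 := by
    zify [show 1 ≤ q by omega, hpow1] at hNnat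
    exact hNnat
  -- row/column sums
  have hscale : ∀ (u : Fin n → F) (c : F) (w : Fin n → F), c ≠ 0 →
      ((∑ t, (c • w) t * u t = 0) ↔ (∑ t, w t * u t = 0)) := by
    intro u c w hc0
    have : ∑ t, (c • w) t * u t = c * ∑ t, w t * u t := by
      rw [Finset.mul_sum]
      exact Finset.sum_congr rfl fun t _ => by simp [mul_assoc]
    rw [this, mul_eq_zero]
    simp [hc0]
  have key1 : ∀ j, ((q:ℤ) - 1) *
      (((univ.filter fun k : Fin N => ∑ t, v k t * v j t = 0).card : ℤ)) =
      (q:ℤ)^(n-1) - 1 := by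
    intro j
    have h1 := detB_count_key v hv0 hvinj hvcov (fun w => ∑ t, w t * v j t = 0)
      (hscale (v j))
    rw [detB_card_and_ne _ (by simp), detB_card_ker_phi (hv0 j)] at h1
    have h2 : Nat.card {i : Fin N // ∑ t, v i t * v j t = 0}
        = (univ.filter fun k : Fin N => ∑ t, v k t * v j t = 0).card := by
      rw [Nat.card_eq_fintype_card, Fintype.card_subtype]
    rw [h2, hF] at h1
    have hp1 : 1 ≤ q ^ (n - 1) := Nat.one_le_pow _ _ (by omega)
    zify [show 1 ≤ q by omega, hp1] at h1
    exact h1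
  have key2 : ∀ i j : Fin N, i ≠ j → ((q:ℤ) - 1) *
      (((univ.filter fun k : Fin N =>
        (∑ t, v k t * v i t = 0) ∧ (∑ t, v k t * v j t = 0)).card : ℤ)) =
      (q:ℤ)^(n-2) - 1 := by
    intro i j hij
    have hs : Submodule.span F {v i} ≠ Submodule.span F {v j} :=
      fun h => hij (hvinj i j h)
    have h1 := detB_count_key v hv0 hvinj hvcov
      (fun w => (∑ t, w t * v i t = 0) ∧ (∑ t, w t * v j t = 0))
      (by
        intro c w hc0
        exact and_congr (hscale (v i) c w hc0) (hscale (v j) c w hc0))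
    rw [detB_card_and_ne _ (by simp),
      detB_card_ker_pair hn (hv0 i) (hv0 j) hs] at h1
    have h2 : Nat.card {k : Fin N // (∑ t, v k t * v i t = 0) ∧ (∑ t, v k t * v j t = 0)}
        = (univ.filter fun k : Fin N =>
            (∑ t, v k t * v i t = 0) ∧ (∑ t, v k t * v j t = 0)).card := by
      rw [Nat.card_eq_fintype_card, Fintype.card_subtype]
    rw [h2, hF] at h1
    have hp1 : 1 ≤ q ^ (n - 2) := Nat.one_le_pow _ _ (by omega)
    zify [show 1 ≤ q by omega, hp1] at h1
    exact h1
  have hsym : ∀ a b : Fin N, (∑ t, v a t * v b t) = (∑ t, v b t * v a t) :=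
    fun a b => Finset.sum_congr rfl fun t _ => mul_comm _ _
  -- entries of B * B
  have hBB : ∀ i j, (B * B) i j
      = (q:ℤ)^(n-2) * (if i = j then (q:ℤ) else (q:ℤ) - 1) := by
    intro i j
    rw [Matrix.mul_apply]
    have expand : ∀ k, B i k * B k j = 1 - A i k - A k j + A i k * A k j := by
      intro k; rw [hB, hB]; ring
    rw [Finset.sum_congr rfl fun k _ => expand k]
    rw [Finset.sum_add_distrib, Finset.sum_sub_distrib, Finset.sum_sub_distrib]
    have hones : (∑ _k : Fin N, (1:ℤ)) = (N:ℤ) := by simp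
    have hrow : (∑ k, A i k)
        = ((univ.filter fun k : Fin N => ∑ t, v k t * v i t = 0).card : ℤ) := by
      rw [Finset.sum_congr rfl fun k _ => by rw [hA, hsym i k]]
      rw [Finset.sum_boole]
    have hcol : (∑ k, A k j)
        = ((univ.filter fun k : Fin N => ∑ t, v k t * v j t = 0).card : ℤ) := by
      rw [Finset.sum_congr rfl fun k _ => hA k j]
      rw [Finset.sum_boole]
    have hprod : (∑ k, A i k * A k j)
        = ((univ.filter fun k : Fin N =>
            (∑ t, v k t * v i t = 0) ∧ (∑ t, v k t * v j t = 0)).card : ℤ) := by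
      have hpt : ∀ k, A i k * A k j =
          if ((∑ t, v k t * v i t = 0) ∧ (∑ t, v k t * v j t = 0)) then (1:ℤ) else 0 := by
        intro k
        rw [hA, hA, hsym i k]
        by_cases h1 : (∑ t, v k t * v i t = 0) <;>
        by_cases h2 : (∑ t, v k t * v j t = 0) <;> simp [h1, h2]
      rw [Finset.sum_congr rfl fun k _ => hpt k, Finset.sum_boole]
    rw [hones, hrow, hcol, hprod]
    by_cases hij : i = j
    · subst hij
      rw [if_pos rfl]
      have hand : (univ.filter fun k : Fin N =>
          (∑ t, v k t * v i t = 0) ∧ (∑ t, v k t * v i t = 0)) =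
          (univ.filter fun k : Fin N => ∑ t, v k t * v i t = 0) := by
        apply Finset.filter_congr; intro k _; simp
      rw [hand]
      apply mul_left_cancel₀ hc
      linear_combination hNZ - key1 i + e1 - e2
    · simp only [if_neg hij]
      apply mul_left_cancel₀ hc
      linear_combination hNZ - key1 i - key1 j + key2 i j hij + e1 - 2 * e2
  -- B * B as rank-one perturbation
  have hentry : ∀ i j : Fin N,
      ((Matrix.replicateCol Unit (fun _ : Fin N => ((q:ℤ) - 1)) *
        Matrix.replicateRow Unit (fun _ : Fin N => (1:ℤ))) i j) = (q:ℤ) - 1 := by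
    intro i j
    simp [Matrix.mul_apply]
  have hmat : B * B = ((q:ℤ)^(n-2)) •
      (1 + Matrix.replicateCol Unit (fun _ : Fin N => ((q:ℤ) - 1)) *
        Matrix.replicateRow Unit (fun _ : Fin N => (1:ℤ))) := by
    ext i j
    rw [Matrix.smul_apply, Matrix.add_apply, hentry i j, hBB i j]
    by_cases hij : i = j
    · simp [hij, Matrix.one_apply, smul_eq_mul, mul_add]
    · simp [hij, Matrix.one_apply, smul_eq_mul]
  rw [hmat, Matrix.det_smul, Matrix.det_one_add_replicateCol_mul_replicateRow]
  have hdot : ((fun _ : Fin N => (1:ℤ)) ⬝ᵥ fun _ => ((q:ℤ) - 1)) = (N:ℤ) * ((q:ℤ) - 1) := by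
    simp [dotProduct, Finset.sum_const, mul_comm]
    ring
  rw [hdot]
  have : (1:ℤ) + (N:ℤ) * ((q:ℤ) - 1) = (q:ℤ)^n := by linear_combination hNZ
  rw [this]
  rw [Fintype.card_fin]
  push_cast
  rw [← pow_mul, ← pow_add]
end

section
/- The absolute value of the determinant of the incidence matrix A between the lines and the hyperplanes of F^n equals q^{(n-2)(N-1)/2} · [n-1]_q, where N = (q^n-1)/(q-1) and [n-1]_q = (q^{n-1}-1)/(q-1). In particular, det A ≠ 0. -/
open Matrix in
lemma detA_det_const {K : Type*} [Field K] {ι : Type*} [DecidableEq ι] [Fintype ι]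
    (a b : K) (ha : a ≠ 0) (hι : 1 ≤ Fintype.card ι)
    (M : Matrix ι ι K) (hM : ∀ i j, M i j = if i = j then a + b else b) :
    M.det = a ^ (Fintype.card ι - 1) * (a + (Fintype.card ι : K) * b) := by
  have hM' : M = a • (1 + Matrix.replicateCol Unit (fun _ : ι => b / a) * Matrix.replicateRow Unit (fun _ : ι => (1:K))) := by
    ext i j
    rcases eq_or_ne i j with h | h
    · subst h
      simp [hM, Matrix.one_apply, Matrix.mul_apply, mul_add, mul_div_cancel₀ _ ha]
    · simp [hM, h, Matrix.one_apply_ne h, Matrix.mul_apply, mul_div_cancel₀ _ ha]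
  rw [hM', Matrix.det_smul, Matrix.det_one_add_replicateCol_mul_replicateRow]
  have hd : (fun _ : ι => (1:K)) ⬝ᵥ (fun _ : ι => b / a) = (Fintype.card ι : K) * (b / a) := by
    simp [dotProduct, Finset.card_univ, mul_comm]
  rw [hd]
  obtain ⟨m, hm⟩ : ∃ m, Fintype.card ι = m + 1 := ⟨_, (Nat.succ_pred_eq_of_pos hι).symm⟩
  rw [hm]
  simp only [Nat.add_sub_cancel]
  field_simp
  ring

/-- geometric sum -/
lemma detA_geom (q k : ℕ) (hq : 2 ≤ q) :
    (∑ i ∈ Finset.range k, q ^ i) * (q - 1) = q ^ k - 1 := by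
  have h1 : 1 ≤ q ^ k := Nat.one_le_pow _ _ (by omega)
  have hz : ((∑ i ∈ Finset.range k, q ^ i : ℕ) : ℤ) * ((q : ℤ) - 1) = (q:ℤ)^k - 1 := by
    push_cast
    exact geom_sum_mul _ _
  have : ((∑ i ∈ Finset.range k, q ^ i) * (q - 1) : ℕ) = ((q ^ k - 1 : ℕ) : ℤ) := by
    push_cast [Nat.cast_sub h1, Nat.cast_sub (by omega : 1 ≤ q)]
    convert hz using 2 <;> push_cast <;> ring
  exact_mod_cast this

lemma detA_div (q k : ℕ) (hq : 2 ≤ q) :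
    (q ^ k - 1) / (q - 1) = ∑ i ∈ Finset.range k, q ^ i :=
  Nat.div_eq_of_eq_mul_left (by omega) (detA_geom q k hq).symm

lemma detA_key (q m : ℕ) (hq : 2 ≤ q) :
    (∑ i ∈ Finset.range (m+1), q ^ i) ^ 2
      = q ^ m + (∑ i ∈ Finset.range (m+2), q ^ i) * (∑ i ∈ Finset.range m, q ^ i) := by
  have hz0 : ((∑ i ∈ Finset.range m, q ^ i : ℕ) : ℤ) * ((q:ℤ) - 1) = (q:ℤ)^m - 1 := by
    push_cast; exact geom_sum_mul _ _
  have hz1 : ((∑ i ∈ Finset.range (m+1), q ^ i : ℕ) : ℤ) * ((q:ℤ) - 1) = (q:ℤ)^(m+1) - 1 := by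
    push_cast; exact geom_sum_mul _ _
  have hz2 : ((∑ i ∈ Finset.range (m+2), q ^ i : ℕ) : ℤ) * ((q:ℤ) - 1) = (q:ℤ)^(m+2) - 1 := by
    push_cast; exact geom_sum_mul _ _
  have hq1 : ((q:ℤ) - 1) ≠ 0 := by
    have : (2:ℤ) ≤ q := by exact_mod_cast hq
    omega
  have key : ((∑ i ∈ Finset.range (m+1), q ^ i : ℕ) : ℤ) ^ 2
      = (q:ℤ)^m + ((∑ i ∈ Finset.range (m+2), q ^ i : ℕ) : ℤ) * ((∑ i ∈ Finset.range m, q ^ i : ℕ) : ℤ) := by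
    have H : (((∑ i ∈ Finset.range (m+1), q ^ i : ℕ) : ℤ) ^ 2) * ((q:ℤ)-1)^2
        = ((q:ℤ)^m + ((∑ i ∈ Finset.range (m+2), q ^ i : ℕ) : ℤ) * ((∑ i ∈ Finset.range m, q ^ i : ℕ) : ℤ)) * ((q:ℤ)-1)^2 := by
      linear_combination (((∑ i ∈ Finset.range (m+1), q ^ i : ℕ) : ℤ) * ((q:ℤ)-1) + ((q:ℤ)^(m+1) - 1)) * hz1
        - (((∑ i ∈ Finset.range m, q ^ i : ℕ) : ℤ) * ((q:ℤ)-1)) * hz2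
        - ((q:ℤ)^(m+2) - 1) * hz0
    exact mul_right_cancel₀ (pow_ne_zero 2 hq1) H
  exact_mod_cast key

lemma detA_parity (q n N : ℕ) (hq : 2 ≤ q) (hn : 2 ≤ n)
    (hN : N = ∑ i ∈ Finset.range n, q ^ i) :
    Even ((n - 2) * (N - 1)) := by
  have hSrec : ∀ k, (∑ i ∈ Finset.range (k+1), q ^ i) = q * (∑ i ∈ Finset.range k, q ^ i) + 1 := by
    intro k
    rw [Finset.sum_range_succ']
    simp [pow_succ, Finset.mul_sum, mul_comm]
  obtain ⟨m, hm⟩ : ∃ m, n = m + 1 := ⟨n - 1, by omega⟩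
  have hN1 : N - 1 = q * (∑ i ∈ Finset.range m, q ^ i) := by
    rw [hN, hm, hSrec]; omega
  rcases Nat.even_or_odd q with hqe | hqo
  · apply Even.mul_left
    rw [hN1]
    exact hqe.mul_right _
  · rcases Nat.even_or_odd n with hne | hno
    · apply Even.mul_right
      rcases hne with ⟨t, ht⟩
      exact ⟨t - 1, by omega⟩
    · -- n odd, so m = n - 1 even, and S m is even
      have hSpar : ∀ k, Even (∑ i ∈ Finset.range k, q ^ i) ↔ Even k := by
        intro k
        induction k with
        | zero => simp
        | succ k ih =>
          rw [Finset.sum_range_succ, Nat.even_add, ih, Nat.even_add_one]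
          have : ¬ Even (q ^ k) := by simp [Nat.even_pow]; intro h; exact absurd h (Nat.not_even_iff_odd.mpr hqo)
          tauto
    
      apply Even.mul_left
      rw [hN1]
      apply Even.mul_left
      rw [hSpar]
      obtain ⟨t, ht⟩ := hno
      exact ⟨t, by omega⟩

def detA_dot {F : Type*} [Field F] {n : ℕ} (u : Fin n → F) : (Fin n → F) →ₗ[F] F where
  toFun w := ∑ k, u k * w k
  map_add' x y := by simp [mul_add, Finset.sum_add_distrib]
  map_smul' c x := by simp [Finset.mul_sum, mul_left_comm]

@[simp] lemma detA_dot_apply {F : Type*} [Field F] {n : ℕ} (u w : Fin n → F) :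
    detA_dot u w = ∑ k, u k * w k := rfl

section main
variable {q n N : ℕ} {F : Type*} [Field F] [Fintype F] [DecidableEq F]

/-- counting: number of lines (among the `v i`) inside a subspace `W`. -/
lemma detA_count (hq : 2 ≤ q) (hF : Fintype.card F = q)
    (v : Fin N → (Fin n → F))
    (hv0 : ∀ i, v i ≠ 0)
    (hvinj : ∀ i j, Submodule.span F {v i} = Submodule.span F {v j} → i = j)
    (hvcov : ∀ w : Fin n → F, w ≠ 0 → ∃ i, w ∈ Submodule.span F {v i})
    (W : Submodule F (Fin n → F)) [DecidablePred (· ∈ W)] :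
    (Finset.univ.filter fun k => v k ∈ W).card * (q - 1)
      = q ^ (Module.finrank F W) - 1 := by
  classical
  have hcardW : (Finset.univ.filter fun w : Fin n → F => w ∈ W).card
      = q ^ Module.finrank F W := by
    rw [← Fintype.card_subtype, ← hF]
    exact Module.card_eq_pow_finrank
  -- the bijection (i, c) ↦ c • v i
  have hbij : ((Finset.univ.filter fun k => v k ∈ W) ×ˢ (Finset.univ.filter fun c : F => c ≠ 0)).card
      = ((Finset.univ.filter fun w : Fin n → F => w ∈ W)).card - 1 := by
    have herase : (Finset.univ.filter fun w : Fin n → F => w ∈ W ∧ w ≠ 0)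
        = (Finset.univ.filter fun w : Fin n → F => w ∈ W).erase 0 := by
      ext w
      simp [Finset.mem_erase, and_comm]
    have hcb : ((Finset.univ.filter fun k => v k ∈ W) ×ˢ (Finset.univ.filter fun c : F => c ≠ 0)).card
        = (Finset.univ.filter fun w : Fin n → F => w ∈ W ∧ w ≠ 0).card := by
      apply Finset.card_bij (fun p _ => p.2 • v p.1)
      · rintro ⟨i, c⟩ hp
        simp only [Finset.mem_product, Finset.mem_filter, Finset.mem_univ, true_and] at hp
        simp only [Finset.mem_filter, Finset.mem_univ, true_and]
        exact ⟨W.smul_mem _ hp.1, smul_ne_zero hp.2 (hv0 i)⟩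
      · rintro ⟨i, c⟩ hp ⟨j, d⟩ hp' heq
        simp only [Finset.mem_product, Finset.mem_filter, Finset.mem_univ, true_and] at hp hp'
        simp only at heq
        have hij : i = j := by
          apply hvinj
          apply le_antisymm
          · rw [Submodule.span_le, Set.singleton_subset_iff]
            refine Submodule.mem_span_singleton.mpr ⟨c⁻¹ * d, ?_⟩
            rw [← smul_smul, ← heq, smul_smul, inv_mul_cancel₀ hp.2, one_smul]
          · rw [Submodule.span_le, Set.singleton_subset_iff]
            refine Submodule.mem_span_singleton.mpr ⟨d⁻¹ * c, ?_⟩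
            rw [← smul_smul, heq, smul_smul, inv_mul_cancel₀ hp'.2, one_smul]
        subst hij
        have hc : c = d := by
          have h0 : (c - d) • v i = 0 := by rw [sub_smul, heq, sub_self]
          rcases smul_eq_zero.mp h0 with h | h
          · exact sub_eq_zero.mp h
          · exact absurd h (hv0 i)
        simp [hc]
      · intro w hw
        simp only [Finset.mem_filter, Finset.mem_univ, true_and] at hw
        obtain ⟨hwW, hw0⟩ := hw
        obtain ⟨i, hi⟩ := hvcov w hw0
        obtain ⟨c, hc⟩ := Submodule.mem_span_singleton.mp hi
        have hc0 : c ≠ 0 := by rintro rfl; simp at hc; exact hw0 hc.symm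
        have hvi : v i ∈ W := by
          have : v i = c⁻¹ • w := by rw [← hc, smul_smul, inv_mul_cancel₀ hc0, one_smul]
          rw [this]; exact W.smul_mem _ hwW
        exact ⟨(i, c), by simp [Finset.mem_product, hvi, hc0], hc⟩
    rw [hcb, herase, Finset.card_erase_of_mem]
    simp [W.zero_mem]
  rw [Finset.card_product] at hbij
  have hFx : (Finset.univ.filter fun c : F => c ≠ 0).card = q - 1 := by
    have : (Finset.univ.filter fun c : F => c ≠ 0) = Finset.univ.erase 0 := by
      ext c; simp
    rw [this, Finset.card_erase_of_mem (Finset.mem_univ _), Finset.card_univ, hF]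
  rw [hFx, hcardW] at hbij
  exact hbij


lemma detA_surj {u : Fin n → F} (hu : u ≠ 0) : Function.Surjective (detA_dot u) := by
  obtain ⟨k0, hk0⟩ : ∃ k0, u k0 ≠ 0 := by
    by_contra h
    push_neg at h
    exact hu (funext h)
  intro c
  refine ⟨fun k => if k = k0 then c * (u k0)⁻¹ else 0, ?_⟩
  simp only [detA_dot_apply, mul_ite, mul_zero, Finset.sum_ite_eq', Finset.mem_univ, if_true]
  field_simp

lemma detA_ker_rank (hn : 1 ≤ n) {u : Fin n → F} (hu : u ≠ 0) :
    Module.finrank F (LinearMap.ker (detA_dot u)) = n - 1 := by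
  have h := LinearMap.finrank_range_add_finrank_ker (detA_dot u)
  rw [LinearMap.range_eq_top.mpr (detA_surj hu), finrank_top, Module.finrank_self,
    Module.finrank_fin_fun] at h
  omega

lemma detA_ker_ne (v : Fin N → (Fin n → F))
    (hv0 : ∀ i, v i ≠ 0)
    (hvinj : ∀ i j, Submodule.span F {v i} = Submodule.span F {v j} → i = j)
    {i j : Fin N} (hij : i ≠ j) :
    LinearMap.ker (detA_dot (v i)) ≠ LinearMap.ker (detA_dot (v j)) := by
  intro h
  obtain ⟨u, hu⟩ := detA_surj (hv0 i) 1
  -- v j = (detA_dot (v j) u) • v i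
  have hco : ∀ k, v j k = (detA_dot (v j) u) * v i k := by
    intro k
    have hek : (detA_dot (v i)) (fun m => if m = k then 1 else 0) = v i k := by
      simp [mul_ite, Finset.sum_ite_eq']
    have hm : ((fun m => if m = k then (1:F) else 0) - (v i k) • u) ∈ LinearMap.ker (detA_dot (v i)) := by
      rw [LinearMap.mem_ker, map_sub, map_smul, hek, hu, smul_eq_mul, mul_one, sub_self]
    rw [h, LinearMap.mem_ker, map_sub, map_smul] at hm
    have hejk : (detA_dot (v j)) (fun m => if m = k then 1 else 0) = v j k := by
      simp [mul_ite, Finset.sum_ite_eq']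
    rw [hejk, smul_eq_mul] at hm
    have := sub_eq_zero.mp hm
    rw [this]; ring
  have hc0 : (detA_dot (v j) u) ≠ 0 := by
    intro h0
    apply hv0 j
    funext k
    rw [hco k, h0, zero_mul]; rfl
  apply hij
  apply hvinj
  apply le_antisymm
  · rw [Submodule.span_le, Set.singleton_subset_iff]
    refine Submodule.mem_span_singleton.mpr ⟨(detA_dot (v j) u)⁻¹, ?_⟩
    funext k
    simp only [Pi.smul_apply, smul_eq_mul]
    rw [hco k, ← mul_assoc, inv_mul_cancel₀ hc0, one_mul]
  · rw [Submodule.span_le, Set.singleton_subset_iff]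
    exact Submodule.mem_span_singleton.mpr ⟨detA_dot (v j) u, by funext k; simp [hco k]⟩

lemma detA_inf_rank (hn : 2 ≤ n) (v : Fin N → (Fin n → F))
    (hv0 : ∀ i, v i ≠ 0)
    (hvinj : ∀ i j, Submodule.span F {v i} = Submodule.span F {v j} → i = j)
    {i j : Fin N} (hij : i ≠ j) :
    Module.finrank F ((LinearMap.ker (detA_dot (v i))) ⊓ (LinearMap.ker (detA_dot (v j))) : Submodule F (Fin n → F)) = n - 2 := by
  set Ki := LinearMap.ker (detA_dot (v i))
  set Kj := LinearMap.ker (detA_dot (v j))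
  have hki : Module.finrank F Ki = n - 1 := detA_ker_rank (by omega) (hv0 i)
  have hkj : Module.finrank F Kj = n - 1 := detA_ker_rank (by omega) (hv0 j)
  have hsum := Submodule.finrank_sup_add_finrank_inf_eq Ki Kj
  have hle : Module.finrank F ↥(Ki ⊔ Kj) ≤ n := by
    simpa [Module.finrank_fin_fun] using (Ki ⊔ Kj).finrank_le
  have hsup : Module.finrank F ↥(Ki ⊔ Kj) = n := by
    rcases Nat.lt_or_ge (Module.finrank F ↥(Ki ⊔ Kj)) n with hlt | hge
    · exfalso
      apply detA_ker_ne v hv0 hvinj hij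
      have h1 : Ki = Ki ⊔ Kj := Submodule.eq_of_le_of_finrank_le le_sup_left (by omega)
      have h2 : Kj = Ki ⊔ Kj := Submodule.eq_of_le_of_finrank_le le_sup_right (by omega)
      exact h1.trans h2.symm
    · omega
  rw [hsup, hki, hkj] at hsum
  omega

end main

set_option maxHeartbeats 1000000 in
open Matrix in
theorem det_A_abs (q n N : ℕ) (hq : 2 ≤ q) (hn : 2 ≤ n)
    (F : Type*) [Field F] [Fintype F] [DecidableEq F] (hF : Fintype.card F = q)
    (hN : N = (q ^ n - 1) / (q - 1))
    (v : Fin N → (Fin n → F))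
    (hv0 : ∀ i, v i ≠ 0)
    (hvinj : ∀ i j, Submodule.span F {v i} = Submodule.span F {v j} → i = j)
    (hvcov : ∀ w : Fin n → F, w ≠ 0 → ∃ i, w ∈ Submodule.span F {v i})
    (A : Matrix (Fin N) (Fin N) ℤ)
    (hA : ∀ i j, A i j = if ∑ k, v i k * v j k = 0 then 1 else 0)
    :
    A.det.natAbs = q ^ ((n - 2) * (N - 1) / 2) * ((q ^ (n - 1) - 1) / (q - 1)) ∧ A.det ≠ 0 := by
  classical
  have hNS : N = ∑ i ∈ Finset.range n, q ^ i := by rw [hN, detA_div q n hq]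
  have hSpos : ∀ k : ℕ, 1 ≤ k → 1 ≤ ∑ i ∈ Finset.range k, q ^ i := by
    intro k hk
    calc 1 = q ^ 0 := by simp
    _ ≤ ∑ i ∈ Finset.range k, q ^ i :=
        Finset.single_le_sum (f := fun i => q ^ i) (fun i _ => Nat.zero_le _)
          (Finset.mem_range.mpr (by omega))
  have hN1 : 1 ≤ N := by rw [hNS]; exact hSpos n (by omega)
  -- entries of A in terms of kernels
  have hAform : ∀ i k, A i k = if v k ∈ LinearMap.ker (detA_dot (v i)) then (1:ℤ) else 0 := by
    intro i k
    rw [hA]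
    simp [LinearMap.mem_ker]
  -- counts
  have hcnt : ∀ i j : Fin N,
      ((Finset.univ.filter fun k => v k ∈
          (LinearMap.ker (detA_dot (v i)) ⊓ LinearMap.ker (detA_dot (v j)) :
            Submodule F (Fin n → F))).card)
        = if i = j then (∑ i ∈ Finset.range (n-1), q ^ i) else (∑ i ∈ Finset.range (n-2), q ^ i) := by
    intro i j
    rcases eq_or_ne i j with rfl | hij
    · rw [if_pos rfl]
      simp only [inf_idem]
      have h := detA_count hq hF v hv0 hvinj hvcov (LinearMap.ker (detA_dot (v i)))
      rw [detA_ker_rank (by omega) (hv0 i)] at h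
      apply Nat.eq_of_mul_eq_mul_right (show 0 < q - 1 by omega)
      rw [h, detA_geom q (n-1) hq]
    · rw [if_neg hij]
      have h := detA_count hq hF v hv0 hvinj hvcov
        (LinearMap.ker (detA_dot (v i)) ⊓ LinearMap.ker (detA_dot (v j)))
      rw [detA_inf_rank hn v hv0 hvinj hij] at h
      apply Nat.eq_of_mul_eq_mul_right (show 0 < q - 1 by omega)
      rw [h, detA_geom q (n-2) hq]
  -- entries of A * Aᵀ
  have hM : ∀ i j, (A * Aᵀ) i j
      = if i = j then ((∑ i ∈ Finset.range (n-1), q ^ i : ℕ) : ℤ)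
        else ((∑ i ∈ Finset.range (n-2), q ^ i : ℕ) : ℤ) := by
    intro i j
    rw [Matrix.mul_apply]
    have hterm : ∀ k, A i k * Aᵀ k j
        = if v k ∈ (LinearMap.ker (detA_dot (v i)) ⊓ LinearMap.ker (detA_dot (v j)) :
            Submodule F (Fin n → F)) then (1:ℤ) else 0 := by
      intro k
      rw [Matrix.transpose_apply, hAform, hAform]
      by_cases h1 : v k ∈ LinearMap.ker (detA_dot (v i)) <;>
        by_cases h2 : v k ∈ LinearMap.ker (detA_dot (v j)) <;>
          simp [h1, h2, Submodule.mem_inf]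
    rw [Finset.sum_congr rfl (fun k _ => hterm k), Finset.sum_boole, hcnt i j]
    split <;> simp
  -- determinant computation over ℚ
  have hq0 : ((q:ℚ)) ^ (n-2) ≠ 0 := pow_ne_zero _ (by exact_mod_cast (by omega : q ≠ 0))
  have hSsucc : (∑ i ∈ Finset.range (n-1), q ^ i)
      = (∑ i ∈ Finset.range (n-2), q ^ i) + q ^ (n-2) := by
    have : n - 1 = (n - 2) + 1 := by omega
    rw [this, Finset.sum_range_succ]
  have hdetQ : (((A * Aᵀ).det : ℤ) : ℚ)
      = ((q:ℚ)^(n-2)) ^ (N - 1)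
        * ((q:ℚ)^(n-2) + (N:ℚ) * ((∑ i ∈ Finset.range (n-2), q ^ i : ℕ) : ℚ)) := by
    have hmapdet : (((A * Aᵀ).det : ℤ) : ℚ) = ((A * Aᵀ).map (Int.cast : ℤ → ℚ)).det :=
      RingHom.map_det (Int.castRingHom ℚ) (A * Aᵀ)
    have hmap : ∀ i j, ((A * Aᵀ).map (Int.cast : ℤ → ℚ)) i j
        = if i = j then ((q:ℚ)^(n-2) + ((∑ i ∈ Finset.range (n-2), q ^ i : ℕ) : ℚ))
          else ((∑ i ∈ Finset.range (n-2), q ^ i : ℕ) : ℚ) := by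
      intro i j
      rw [Matrix.map_apply, hM i j]
      rcases eq_or_ne i j with rfl | hij
      · simp only [if_pos rfl]
        rw [hSsucc]
        push_cast
        ring
      · simp [hij]
    have hcard : (1:ℕ) ≤ Fintype.card (Fin N) := by simp [hN1]
    have := detA_det_const ((q:ℚ)^(n-2))
      ((∑ i ∈ Finset.range (n-2), q ^ i : ℕ) : ℚ) hq0 hcard _ hmap
    rw [hmapdet, this]
    simp
  -- the key arithmetic identity
  have hkey : (∑ i ∈ Finset.range (n-1), q ^ i) ^ 2
      = q ^ (n-2) + (∑ i ∈ Finset.range n, q ^ i) * (∑ i ∈ Finset.range (n-2), q ^ i) := by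
    obtain ⟨m, hm⟩ : ∃ m, n = m + 2 := ⟨n-2, by omega⟩
    subst hm
    simpa using detA_key q m hq
  have heven : Even ((n-2) * (N-1)) := detA_parity q n N hq hn hNS
  set D : ℕ := q ^ ((n-2) * (N-1) / 2) * (∑ i ∈ Finset.range (n-1), q ^ i) with hD
  have h2 : (n-2) * (N-1) / 2 * 2 = (n-2) * (N-1) := Nat.div_mul_cancel heven.two_dvd
  have hDD : D * D = (q^(n-2))^(N-1) * (q^(n-2) + N * (∑ i ∈ Finset.range (n-2), q ^ i)) := by
    have hpow : q^((n-2)*(N-1)/2) * q^((n-2)*(N-1)/2) = (q^(n-2))^(N-1) := by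
      rw [← pow_add, ← pow_mul]
      congr 1
      omega
    have hS1 : (∑ i ∈ Finset.range (n-1), q ^ i) * (∑ i ∈ Finset.range (n-1), q ^ i)
        = q^(n-2) + N * (∑ i ∈ Finset.range (n-2), q ^ i) := by
      rw [hNS, ← hkey, pow_two]
    calc D * D = (q^((n-2)*(N-1)/2) * q^((n-2)*(N-1)/2))
          * ((∑ i ∈ Finset.range (n-1), q ^ i) * (∑ i ∈ Finset.range (n-1), q ^ i)) := by
            rw [hD]; ring
      _ = (q^(n-2))^(N-1) * (q^(n-2) + N * (∑ i ∈ Finset.range (n-2), q ^ i)) := by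
            rw [hpow, hS1]
  have hDsq : ((D:ℤ) : ℚ) * ((D:ℤ) : ℚ)
      = ((q:ℚ)^(n-2)) ^ (N - 1)
        * ((q:ℚ)^(n-2) + (N:ℚ) * ((∑ i ∈ Finset.range (n-2), q ^ i : ℕ) : ℚ)) := by
    have := congrArg (fun x : ℕ => (x : ℚ)) hDD
    push_cast at this
    push_cast
    linarith [this]
  have hdet2 : A.det * A.det = (D:ℤ) * D := by
    have hz : ((A.det * A.det : ℤ) : ℚ) = (((D:ℤ) * D : ℤ) : ℚ) := by
      push_cast
      have hdm : ((A.det : ℚ)) * (A.det : ℚ) = (((A * Aᵀ).det : ℤ) : ℚ) := by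
        rw [Matrix.det_mul, Matrix.det_transpose]
        push_cast
        ring
      rw [← hdm] at hdetQ; push_cast at hdetQ; rw [hdetQ]
      push_cast at hDsq ⊢
      linarith [hDsq]
    exact_mod_cast hz
  have habs : A.det.natAbs = D := by
    have h1 : (A.det.natAbs : ℤ) * A.det.natAbs = (D:ℤ) * D := by
      rw [Int.natAbs_mul_self']
      exact hdet2
    have h2 : A.det.natAbs * A.det.natAbs = D * D := by exact_mod_cast h1
    have h3 : A.det.natAbs ^ 2 = D ^ 2 := by rw [pow_two, pow_two]; exact h2
    exact Nat.pow_left_injective (by norm_num) h3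
  have hDpos : 0 < D := by
    rw [hD]
    have h := hSpos (n-1) (by omega)
    exact Nat.mul_pos (Nat.pow_pos (by omega)) (by omega)
  constructor
  · rw [habs, hD, detA_div q (n-1) hq]
  · rw [← Int.natAbs_ne_zero, habs]
    omega
end

section
/- N - 1 = q·[n-1]_q, i.e., (q^n-1)/(q-1) - 1 = q·(q^{n-1}-1)/(q-1), and consequently |det(AB)| = (N-1)·q^{N(n-2)} where A, B are the incidence and non-incidence matrices between lines and hyperplanes of F^n. -/
section Aux
variable {F : Type*} [Field F] {n : ℕ}

/-- Dot-product functional. -/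
def phiF (a : Fin n → F) : (Fin n → F) →ₗ[F] F where
  toFun w := ∑ k, a k * w k
  map_add' x y := by simp [mul_add, Finset.sum_add_distrib]
  map_smul' c x := by simp [Finset.mul_sum, mul_left_comm]

lemma phiF_apply (a w : Fin n → F) : phiF a w = ∑ k, a k * w k := rfl

lemma phiF_single [DecidableEq F] (a : Fin n → F) (k : Fin n) (c : F) :
    phiF a (Pi.single k c) = a k * c := by
  rw [phiF_apply]
  rw [Finset.sum_eq_single k]
  · simp
  · intro b _ hb; simp [Pi.single_eq_of_ne hb]
  · simp

lemma finrank_ker_phiF [DecidableEq F] {a : Fin n → F} (ha : a ≠ 0) :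
    Module.finrank F (LinearMap.ker (phiF a)) = n - 1 := by
  have hsurj : Function.Surjective (phiF a) := by
    obtain ⟨k, hk⟩ : ∃ k, a k ≠ 0 := by
      by_contra h; push_neg at h; exact ha (funext fun k => h k)
    intro c
    exact ⟨Pi.single k (c / a k), by rw [phiF_single]; field_simp⟩
  have h1 : Module.finrank F (LinearMap.range (phiF a)) = 1 := by
    rw [LinearMap.range_eq_top.mpr hsurj, finrank_top, Module.finrank_self]
  have h2 := LinearMap.finrank_range_add_finrank_ker (phiF a)
  rw [h1, Module.finrank_fin_fun] at h2
  omega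

lemma ker_phiF_eq [DecidableEq F] {a b : Fin n → F} (ha : a ≠ 0)
    (h : LinearMap.ker (phiF a) = LinearMap.ker (phiF b)) : ∃ c : F, b = c • a := by
  obtain ⟨k0, hk0⟩ : ∃ k, a k ≠ 0 := by
    by_contra hcon; push_neg at hcon; exact ha (funext fun k => hcon k)
  set w0 : Fin n → F := Pi.single k0 1 with hw0
  have haw0 : phiF a w0 ≠ 0 := by rw [phiF_single]; simpa
  refine ⟨phiF b w0 / phiF a w0, funext fun k => ?_⟩
  set ek : Fin n → F := Pi.single k 1 with hek
  have hu : (phiF a ek) • w0 - (phiF a w0) • ek ∈ LinearMap.ker (phiF a) := by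
    simp only [LinearMap.mem_ker, map_sub, map_smul, smul_eq_mul]
    ring
  rw [h] at hu
  simp only [LinearMap.mem_ker, map_sub, map_smul, smul_eq_mul, sub_eq_zero] at hu
  have hbk : phiF b ek = (phiF b w0 / phiF a w0) * phiF a ek := by
    rw [div_mul_eq_mul_div, eq_div_iff haw0]
    linear_combination -hu
  simpa [hek, phiF_single] using hbk

end Aux

section Aux2
variable {F : Type*} [Field F] [Fintype F] [DecidableEq F] {n N : ℕ}

lemma countF (v : Fin N → (Fin n → F))
    (hv0 : ∀ i, v i ≠ 0)
    (hvinj : ∀ i j, Submodule.span F {v i} = Submodule.span F {v j} → i = j)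
    (hvcov : ∀ w : Fin n → F, w ≠ 0 → ∃ i, w ∈ Submodule.span F {v i})
    (U : Submodule F (Fin n → F)) :
    (Fintype.card F - 1) * Nat.card {k : Fin N // v k ∈ U}
      = Fintype.card F ^ (Module.finrank F U) - 1 := by
  classical
  have hf : Function.Bijective
      (fun p : Fˣ × {k : Fin N // v k ∈ U} =>
        (⟨⟨(p.1 : F) • v p.2.1, U.smul_mem _ p.2.2⟩,
          by simpa using smul_ne_zero p.1.ne_zero (hv0 p.2.1)⟩ :
          {w : U // (w : Fin n → F) ≠ 0})) := by
    constructor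
    · rintro ⟨c, k, hk⟩ ⟨c', k', hk'⟩ hpq
      have hval : (c : F) • v k = (c' : F) • v k' :=
        congrArg (fun x : {w : U // (w : Fin n → F) ≠ 0} => ((x.1 : Fin n → F))) hpq
      have hsp : Submodule.span F {v k} = Submodule.span F {v k'} := by
        rw [← Submodule.span_singleton_smul_eq c.isUnit (v k),
          ← Submodule.span_singleton_smul_eq c'.isUnit (v k'), hval]
      have hkk : k = k' := hvinj _ _ hsp
      subst hkk
      have hc : (c : F) = c' := by
        have h2 : ((c : F) - c') • v k = 0 := by rw [sub_smul, hval, sub_self]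
        rcases smul_eq_zero.mp h2 with h | h
        · exact sub_eq_zero.mp h
        · exact absurd h (hv0 k)
      simp [Prod.ext_iff, Units.ext_iff, hc]
    · rintro ⟨⟨w, hwU⟩, hw0⟩
      simp only [ne_eq] at hw0
      obtain ⟨i, hi⟩ := hvcov w hw0
      rw [Submodule.mem_span_singleton] at hi
      obtain ⟨c, hc⟩ := hi
      have hc0 : c ≠ 0 := by rintro rfl; simp at hc; exact hw0 hc.symm
      have hvi : v i ∈ U := by
        have : v i = c⁻¹ • w := by rw [← hc, smul_smul, inv_mul_cancel₀ hc0, one_smul]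
        rw [this]; exact U.smul_mem _ hwU
      exact ⟨⟨Units.mk0 c hc0, ⟨i, hvi⟩⟩, by simp [hc]⟩
  have hcard := Nat.card_congr (Equiv.ofBijective _ hf)
  rw [Nat.card_prod] at hcard
  have hu : Nat.card Fˣ = Fintype.card F - 1 := by
    rw [Nat.card_eq_fintype_card, Fintype.card_units]
  have hr : Nat.card {w : U // (w : Fin n → F) ≠ 0}
      = Fintype.card F ^ (Module.finrank F U) - 1 := by
    rw [Nat.card_eq_fintype_card]
    have : Fintype.card {w : U // (w : Fin n → F) ≠ 0}
        = Fintype.card U - Fintype.card {w : U // (w : Fin n → F) = 0} := by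
      exact Fintype.card_subtype_compl _
    rw [this]
    have h1 : Fintype.card {w : U // (w : Fin n → F) = 0} = 1 := by
      simp only [ZeroMemClass.coe_eq_zero]
      exact Fintype.card_subtype_eq 0
    rw [h1, Module.card_eq_pow_finrank (K := F) (V := U)]
  rw [hu, hr] at hcard
  exact hcard

end Aux2

lemma sum_indicatorZ {N : ℕ} (p : Fin N → Prop) [DecidablePred p] :
    ∑ k, (if p k then (1 : ℤ) else 0) = (Nat.card {k : Fin N // p k} : ℤ) := by
  rw [Finset.sum_boole, Nat.card_eq_fintype_card, Fintype.card_subtype]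


theorem det_AB_abs (q n N : ℕ) (hq : 2 ≤ q) (hn : 2 ≤ n)
    (F : Type*) [Field F] [Fintype F] [DecidableEq F] (hF : Fintype.card F = q)
    (hN : N = (q ^ n - 1) / (q - 1))
    (v : Fin N → (Fin n → F))
    (hv0 : ∀ i, v i ≠ 0)
    (hvinj : ∀ i j, Submodule.span F {v i} = Submodule.span F {v j} → i = j)
    (hvcov : ∀ w : Fin n → F, w ≠ 0 → ∃ i, w ∈ Submodule.span F {v i})
    (A : Matrix (Fin N) (Fin N) ℤ)
    (hA : ∀ i j, A i j = if ∑ k, v i k * v j k = 0 then 1 else 0)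
    (B : Matrix (Fin N) (Fin N) ℤ) (hB : ∀ i j, B i j = 1 - A i j):
    N - 1 = q * ((q ^ (n - 1) - 1) / (q - 1)) ∧ (A * B).det.natAbs = (N - 1) * q ^ (N * (n - 2)) := by
  classical
  subst hF
  set a := Fintype.card F with ha
  -- kernels
  set K : Fin N → Submodule F (Fin n → F) := fun i => LinearMap.ker (phiF (v i)) with hK
  -- basic power facts
  have ha1 : 1 ≤ a := by omega
  have hXpos : 1 ≤ a ^ n := Nat.one_le_pow _ _ (by omega)
  have hYpos : 1 ≤ a ^ (n - 1) := Nat.one_le_pow _ _ (by omega)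
  have hZpos : 1 ≤ a ^ (n - 2) := Nat.one_le_pow _ _ (by omega)
  have h4 : 4 ≤ a ^ n := by
    calc (4 : ℕ) = 2 ^ 2 := by norm_num
    _ ≤ 2 ^ n := Nat.pow_le_pow_right (by norm_num) hn
    _ ≤ a ^ n := Nat.pow_le_pow_left hq n
  -- count over ⊤ : relates N
  have hNe : (a - 1) * N = a ^ n - 1 := by
    have h := countF v hv0 hvinj hvcov ⊤
    have h1 : Nat.card {k : Fin N // v k ∈ (⊤ : Submodule F (Fin n → F))} = N := by
      simp [Nat.card_eq_fintype_card, Fintype.card_subtype, Finset.filter_true]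
    have h2 : Module.finrank F (⊤ : Submodule F (Fin n → F)) = n := by
      rw [finrank_top, Module.finrank_fin_fun]
    rw [h1, h2] at h
    exact h
  have hN1 : 1 ≤ N := by
    rcases Nat.eq_zero_or_pos N with h0 | h; · rw [h0, Nat.mul_zero] at hNe; omega
    · exact h
  -- count over hyperplanes
  have fri : ∀ i, Module.finrank F (K i) = n - 1 := fun i => finrank_ker_phiF (hv0 i)
  have hci : ∀ i, (a - 1) * Nat.card {k : Fin N // v k ∈ K i} = a ^ (n - 1) - 1 := by
    intro i
    have h := countF v hv0 hvinj hvcov (K i)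
    rw [fri i] at h
    exact h
  -- intersections of two distinct hyperplanes
  have hcij : ∀ i j, i ≠ j →
      (a - 1) * Nat.card {k : Fin N // v k ∈ K i ⊓ K j} = a ^ (n - 2) - 1 := by
    intro i j hij
    have hne : K i ≠ K j := by
      intro h
      obtain ⟨c, hc⟩ := ker_phiF_eq (hv0 i) h
      have hc0 : c ≠ 0 := by rintro rfl; rw [zero_smul] at hc; exact hv0 j hc
      have hsp : Submodule.span F {v j} = Submodule.span F {v i} := by
        rw [hc, Submodule.span_singleton_smul_eq (IsUnit.mk0 c hc0)]
      exact hij (hvinj j i hsp).symm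
    have hKji : ¬ K j ≤ K i := fun hle =>
      hne (Submodule.eq_of_le_of_finrank_eq hle (by rw [fri i, fri j])).symm
    have hlt : K i < K i ⊔ K j :=
      lt_of_le_of_ne le_sup_left (fun h => hKji (le_sup_right.trans h.symm.le))
    have h1 : n - 1 < Module.finrank F ↥(K i ⊔ K j) := by
      rw [← fri i]; exact Submodule.finrank_lt_finrank_of_lt hlt
    have h2 : Module.finrank F ↥(K i ⊔ K j) ≤ n := by
      have := Submodule.finrank_le (K i ⊔ K j)
      rwa [Module.finrank_fin_fun] at this
    have h3 := Submodule.finrank_sup_add_finrank_inf_eq (K i) (K j)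
    rw [fri i, fri j] at h3
    have hinf : Module.finrank F ↥(K i ⊓ K j) = n - 2 := by omega
    have h := countF v hv0 hvinj hvcov (K i ⊓ K j)
    rw [hinf] at h
    exact h
  -- first conjunct
  have hdvd : (a - 1) ∣ a ^ (n - 1) - 1 := by
    simpa using Nat.sub_dvd_pow_sub_pow a 1 (n - 1)
  have hm : (a - 1) * ((a ^ (n - 1) - 1) / (a - 1)) = a ^ (n - 1) - 1 :=
    Nat.mul_div_cancel' hdvd
  set m := (a ^ (n - 1) - 1) / (a - 1) with hmdef
  have e3 : a ^ (n - 1) * a = a ^ n := by rw [← pow_succ]; congr 1; omega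
  have goal1 : N - 1 = a * m := by
    have key : (a - 1) * (N - 1) = (a - 1) * (a * m) := by
      zify [ha1, hN1, hXpos, hYpos] at hNe hm ⊢
      have e3' : (a : ℤ) ^ (n - 1) * a = (a : ℤ) ^ n := by exact_mod_cast e3
      linear_combination hNe - (a : ℤ) * hm - e3'
    exact Nat.eq_of_mul_eq_mul_left (by omega) key
  refine ⟨goal1, ?_⟩
  -- matrix entries
  have hmemi : ∀ i k : Fin N, (∑ l, v i l * v k l = 0) ↔ v k ∈ K i := by
    intro i k
    rw [hK, LinearMap.mem_ker, phiF_apply]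
  have hAB : ∀ i j, (A * B) i j = if i = j then 0 else ((a : ℤ)) ^ (n - 2) := by
    intro i j
    rw [Matrix.mul_apply]
    have hterm : ∀ k, A i k * B k j =
        (if v k ∈ K i then (1 : ℤ) else 0) - (if v k ∈ K i ⊓ K j then 1 else 0) := by
      intro k
      rw [hB, hA, hA]
      have h1 : (∑ l, v i l * v k l = 0) ↔ v k ∈ K i := hmemi i k
      have h2 : (∑ l, v k l * v j l = 0) ↔ v k ∈ K j := by
        rw [show (∑ l, v k l * v j l) = ∑ l, v j l * v k l from
          Finset.sum_congr rfl fun l _ => mul_comm _ _]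
        exact hmemi j k
      rw [if_congr h1 rfl rfl, if_congr h2 rfl rfl]
      by_cases hp : v k ∈ K i <;> by_cases hr : v k ∈ K j <;>
        simp [hp, hr, Submodule.mem_inf]
    rw [Finset.sum_congr rfl fun k _ => hterm k, Finset.sum_sub_distrib]
    rw [sum_indicatorZ, sum_indicatorZ]
    by_cases hij : i = j
    · subst hij
      have : ∀ k : Fin N, v k ∈ K i ⊓ K i ↔ v k ∈ K i := by simp
      rw [Nat.card_congr (Equiv.subtypeEquivRight this)]
      simp
    · rw [if_neg hij]
      have h1 := hci i
      have h2 := hcij i j hij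
      have haz : ((a : ℤ) - 1) ≠ 0 := by
        have : (1 : ℤ) < (a : ℤ) := by exact_mod_cast hq
        omega
      apply mul_left_cancel₀ haz
      zify [ha1, hYpos, hZpos] at h1 h2
      have e4 : (a : ℤ) ^ (n - 2) * a = (a : ℤ) ^ (n - 1) := by
        have : a ^ (n - 2) * a = a ^ (n - 1) := by rw [← pow_succ]; congr 1; omega
        exact_mod_cast this
      linear_combination h1 - h2 - e4
  -- identify the matrix
  have hABmat : A * B = ((a : ℤ) ^ (n - 2)) •
      ((Matrix.of fun _ _ : Fin N => (1 : ℤ)) - 1) := by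
    ext i j
    rw [hAB]
    by_cases hij : i = j <;>
      simp [hij, Matrix.one_apply, Matrix.smul_apply]
  -- determinant
  rw [hABmat, Matrix.det_smul]
  have hJ : (Matrix.of fun _ _ : Fin N => (1 : ℤ)) - 1 =
      -(1 + Matrix.replicateCol (Fin 1) (fun _ => (-1 : ℤ)) * Matrix.replicateRow (Fin 1) (fun _ => (1 : ℤ))) := by
    ext i j
    by_cases hij : i = j <;> simp [Matrix.mul_apply, Matrix.one_apply, hij]
  rw [hJ, Matrix.det_neg]
  erw [Matrix.det_one_add_replicateCol_mul_replicateRow (ι := Fin 1)]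
  have hdot : dotProduct (fun _ : Fin N => (1 : ℤ)) (fun _ : Fin N => (-1 : ℤ))
      = -(N : ℤ) := by
    simp [dotProduct]
  rw [hdot]
  simp only [Fintype.card_fin, Int.natAbs_mul, Int.natAbs_pow, Int.natAbs_natCast,
    Int.natAbs_neg, Int.natAbs_one, one_pow, one_mul]
  have habs : (1 + -(N : ℤ)).natAbs = N - 1 := by omega
  rw [habs, ← pow_mul]
  ring
end

section
/- The Hessian matrix of the Macaulay dual generator F_{V(n,q)} evaluated at X_1 = ... = X_N = 1 equals Φ(N, 0, t_{n,2,q}), the N×N matrix with zero diagonal and all off-diagonal entries equal to t_{n,2,q} = (q^{(n(n-1)-2)/2}/(n-2)!)·∏_{k=1}^{n-2}[k]_q; consequently its determinant has absolute value (N-1)·t_{n,2,q}^N. -/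
open scoped Classical

set_option linter.unusedSectionVars false



section aux
variable {q n N : ℕ} {F : Type*} [Field F] [Fintype F] {v : Fin N → (Fin n → F)}

lemma aux_span_smul (hvinj : ∀ i j, Submodule.span F {v i} = Submodule.span F {v j} → i = j)
    {x y : Fin N} {c : F} (hc : c ≠ 0) (h : c • v x = v y) : x = y := by
  apply hvinj
  have : Submodule.span F {c • v x} = Submodule.span F {v x} :=
    Submodule.span_singleton_smul_eq (IsUnit.mk0 c hc) _
  rw [← this, h]

lemma aux_vinj (hvinj : ∀ i j, Submodule.span F {v i} = Submodule.span F {v j} → i = j) :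
    Function.Injective v := by
  intro x y h
  exact aux_span_smul hvinj one_ne_zero (by rw [one_smul, h])

lemma aux_line_count (hF : Fintype.card F = q) (hv0 : ∀ i, v i ≠ 0)
    (hvinj : ∀ i j, Submodule.span F {v i} = Submodule.span F {v j} → i = j)
    (hvcov : ∀ w : Fin n → F, w ≠ 0 → ∃ i, w ∈ Submodule.span F {v i})
    (W : Submodule F (Fin n → F)) :
    (Finset.univ.filter (fun x : Fin N => v x ∈ W)).card * (q - 1)
      = q ^ (Module.finrank F ↥W) - 1 := by
  set f : {x : Fin N // v x ∈ W} × {c : F // c ≠ 0} → {w : W // w ≠ 0} :=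
    fun p => ⟨⟨p.2.1 • v p.1.1, W.smul_mem _ p.1.2⟩, by
      simp only [ne_eq, Submodule.mk_eq_zero]
      exact smul_ne_zero p.2.2 (hv0 _)⟩ with hf
  have hbij : Function.Bijective f := by
    constructor
    · rintro ⟨⟨x, hx⟩, ⟨c, hc⟩⟩ ⟨⟨x', hx'⟩, ⟨c', hc'⟩⟩ h
      have h1 : c • v x = c' • v x' := by
        simpa [hf, Subtype.ext_iff] using h
      have hxx : x = x' := by
        refine aux_span_smul hvinj (c := c'⁻¹ * c) (mul_ne_zero (inv_ne_zero hc') hc) ?_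
        rw [mul_smul, h1, inv_smul_smul₀ hc']
      subst hxx
      have hcc : c = c' := by
        by_contra hne
        have : (c - c') • v x = 0 := by rw [sub_smul, h1, sub_self]
        rcases smul_eq_zero.mp this with h' | h'
        · exact hne (sub_eq_zero.mp h')
        · exact hv0 x h'
      simp [hcc]
    · rintro ⟨⟨w, hw⟩, hne⟩
      have hw0 : w ≠ 0 := by simpa [Subtype.ext_iff] using hne
      obtain ⟨x, hx⟩ := hvcov w hw0
      obtain ⟨c, hc⟩ := Submodule.mem_span_singleton.mp hx
      have hc0 : c ≠ 0 := by rintro rfl; rw [zero_smul] at hc; exact hw0 hc.symm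
      have hvxW : v x ∈ W := by
        have : c⁻¹ • w ∈ W := W.smul_mem _ hw
        rwa [← hc, inv_smul_smul₀ hc0] at this
      exact ⟨⟨⟨x, hvxW⟩, ⟨c, hc0⟩⟩, by simp [hf, Subtype.ext_iff, hc]⟩
  have hcards := Fintype.card_of_bijective hbij
  rw [Fintype.card_prod] at hcards
  have h1 : Fintype.card {x : Fin N // v x ∈ W}
      = (Finset.univ.filter (fun x : Fin N => v x ∈ W)).card := Fintype.card_subtype _
  have h2 : Fintype.card {c : F // c ≠ 0} = q - 1 := by
    rw [← Fintype.card_congr (unitsEquivNeZero (G₀ := F)), Fintype.card_units, hF]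
  have h3 : Fintype.card {w : W // w ≠ 0} = q ^ (Module.finrank F ↥W) - 1 := by
    have := Fintype.card_subtype_compl (fun w : W => w = 0)
    rw [Fintype.card_subtype_eq (0 : W)] at this
    have hW : Fintype.card W = q ^ (Module.finrank F ↥W) := by
      rw [← hF]; exact Module.card_eq_pow_finrank
    simp only [ne_eq]
    rw [this, hW]
  rw [h1, h2, h3] at hcards
  exact hcards

end aux



section aux2
variable {q n N : ℕ} {F : Type*} [Field F] [Fintype F] {v : Fin N → (Fin n → F)}


lemma aux_coe_iff (s : Finset (Fin N)) :
    LinearIndependent F (fun i : s => v i) ↔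
      LinearIndependent F (fun i : (↑s : Set (Fin N)) => v i) :=
  (linearIndependent_equiv' (Equiv.subtypeEquivRight (fun x => (Finset.mem_coe).symm)) rfl).symm

lemma aux_indep_mono (hvI : Function.Injective v) {s t : Finset (Fin N)} (hts : t ⊆ s)
    (h : LinearIndependent F (fun i : s => v i)) : LinearIndependent F (fun i : t => v i) := by
  rw [aux_coe_iff] at h ⊢
  change LinearIndepOn F v (↑s : Set (Fin N)) at h
  change LinearIndepOn F v (↑t : Set (Fin N))
  rw [linearIndepOn_iff_image (Set.injOn_of_injective hvI)] at h ⊢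
  exact h.mono (Set.image_mono (by exact_mod_cast hts))

lemma aux_indep_insert (hvI : Function.Injective v) {s : Finset (Fin N)} {x : Fin N}
    (hx : x ∉ s) :
    (LinearIndependent F (fun i : (insert x s : Finset (Fin N)) => v i)) ↔
      (LinearIndependent F (fun i : s => v i)) ∧ v x ∉ Submodule.span F (v '' ↑s) := by
  rw [aux_coe_iff, aux_coe_iff, Finset.coe_insert]
  exact linearIndepOn_insert (K := F) (f := v) (a := x) (s := (↑s : Set (Fin N)))
    (by simpa using hx)

lemma aux_range_restrict (s : Finset (Fin N)) :
    Set.range (fun i : s => v i) = v '' ↑s := by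
  ext w; simp

lemma aux_finrank_span {s : Finset (Fin N)}
    (h : LinearIndependent F (fun i : s => v i)) :
    Module.finrank F ↥(Submodule.span F (v '' ↑s)) = s.card := by
  rw [← aux_range_restrict s, finrank_span_eq_card h, Fintype.card_coe]

lemma aux_indep_pair (hv0 : ∀ i, v i ≠ 0)
    (hvinj : ∀ i j, Submodule.span F {v i} = Submodule.span F {v j} → i = j)
    {i j : Fin N} (hij : i ≠ j) :
    LinearIndependent F (fun k : ({i, j} : Finset (Fin N)) => v k) := by
  have hvI : Function.Injective v := fun x y h =>
    aux_span_smul hvinj one_ne_zero (by rw [one_smul, h])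
  rw [aux_indep_insert hvI (by simpa using hij)]
  constructor
  · rw [aux_coe_iff]
    change LinearIndepOn F v (↑({j} : Finset (Fin N)) : Set (Fin N))
    rw [linearIndepOn_iff_image (Set.injOn_of_injective hvI)]
    have himg : v '' (↑({j} : Finset (Fin N))) = {v j} := by simp
    rw [himg]
    exact LinearIndepOn.singleton (hv0 j)
  · intro hmem
    rw [Finset.coe_singleton, Set.image_singleton] at hmem
    obtain ⟨c, hc⟩ := Submodule.mem_span_singleton.mp hmem
    have hc0 : c ≠ 0 := by rintro rfl; rw [zero_smul] at hc; exact hv0 i hc.symm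
    exact hij (aux_span_smul hvinj hc0 hc).symm

end aux2



section aux3
variable {q n N : ℕ} {F : Type*} [Field F] [Fintype F] {v : Fin N → (Fin n → F)}


variable (v) in
noncomputable def Bset (i j : Fin N) (m : ℕ) : Finset (Finset (Fin N)) :=
  Finset.univ.filter (fun s : Finset (Fin N) =>
    s.card = m ∧ i ∈ s ∧ j ∈ s ∧ LinearIndependent F (fun k : s => v k))

lemma mem_Bset {i j : Fin N} {m : ℕ} {s : Finset (Fin N)} :
    s ∈ Bset v i j m ↔
      s.card = m ∧ i ∈ s ∧ j ∈ s ∧ LinearIndependent F (fun k : s => v k) := by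
  simp [Bset]

lemma Bset_two (hv0 : ∀ i, v i ≠ 0)
    (hvinj : ∀ i j, Submodule.span F {v i} = Submodule.span F {v j} → i = j)
    {i j : Fin N} (hij : i ≠ j) : Bset v i j 2 = {({i, j} : Finset (Fin N))} := by
  have hcard2 : ({i, j} : Finset (Fin N)).card = 2 := by
    rw [Finset.card_insert_of_notMem (by simpa using hij), Finset.card_singleton]
  ext s
  rw [mem_Bset, Finset.mem_singleton]
  constructor
  · rintro ⟨hc, hi, hj, -⟩
    have hsub : ({i, j} : Finset (Fin N)) ⊆ s := by
      intro x hx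
      rcases Finset.mem_insert.mp hx with rfl | hx
      · exact hi
      · rw [Finset.mem_singleton] at hx; subst hx; exact hj
    exact (Finset.eq_of_subset_of_card_le hsub (by rw [hc, hcard2])).symm
  · rintro rfl
    exact ⟨hcard2, Finset.mem_insert_self _ _,
      Finset.mem_insert_of_mem (Finset.mem_singleton_self _),
      aux_indep_pair hv0 hvinj hij⟩

lemma Bset_step (hF : Fintype.card F = q) (hv0 : ∀ i, v i ≠ 0)
    (hvinj : ∀ i j, Submodule.span F {v i} = Submodule.span F {v j} → i = j)
    (hvcov : ∀ w : Fin n → F, w ≠ 0 → ∃ i, w ∈ Submodule.span F {v i})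
    (hq : 2 ≤ q) {i j : Fin N} (hij : i ≠ j) (m : ℕ) :
    (Bset v i j m).card * (N - (q ^ m - 1) / (q - 1))
      = (Bset v i j (m + 1)).card * (m - 1) := by
  have hvI : Function.Injective v := fun x y h => hvinj x y (by rw [h])
  refine Finset.card_mul_eq_card_mul (fun s S => s ⊆ S) ?_ ?_
  · -- above degree
    intro s hs
    rw [mem_Bset] at hs
    obtain ⟨hcard, hi, hj, hindep⟩ := hs
    set W := Submodule.span F (v '' ↑s) with hW
    have hmem_of : ∀ x, x ∈ s → v x ∈ W := fun x hx =>
      Submodule.subset_span (Set.mem_image_of_mem v hx)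
    -- the bipartiteAbove set is in bijection with lines outside W
    have hbij : (Finset.univ.filter (fun x : Fin N => ¬ (v x ∈ W))).card
        = ((Bset v i j (m + 1)).bipartiteAbove (fun s S => s ⊆ S) s).card := by
      refine Finset.card_bij (fun x _ => insert x s) ?_ ?_ ?_
      · intro x hx
        rw [Finset.mem_filter] at hx
        have hxs : x ∉ s := fun h => hx.2 (hmem_of x h)
        rw [Finset.mem_bipartiteAbove, mem_Bset]
        exact ⟨⟨by rw [Finset.card_insert_of_notMem hxs, hcard],
          Finset.mem_insert_of_mem hi, Finset.mem_insert_of_mem hj,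
          (aux_indep_insert hvI hxs).mpr ⟨hindep, hx.2⟩⟩, Finset.subset_insert _ _⟩
      · intro x hx y hy h
        rw [Finset.mem_filter] at hx hy
        have hxs : x ∉ s := fun hh => hx.2 (hmem_of x hh)
        have hys : y ∉ s := fun hh => hy.2 (hmem_of y hh)
        replace h : insert x s = insert y s := h
        have : x ∈ insert y s := h ▸ Finset.mem_insert_self x s
        rcases Finset.mem_insert.mp this with h' | h'
        · exact h'
        · exact absurd h' hxs
      · intro S hS
        rw [Finset.mem_bipartiteAbove, mem_Bset] at hS
        obtain ⟨⟨hScard, hSi, hSj, hSindep⟩, hsS⟩ := hS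
        have hss : s ⊂ S := Finset.ssubset_iff_subset_ne.mpr
          ⟨hsS, by intro h; rw [h, hScard] at hcard; omega⟩
        obtain ⟨x, hxS, hxs⟩ := Finset.exists_of_ssubset hss
        have hins : insert x s = S := by
          refine Finset.eq_of_subset_of_card_le ?_ ?_
          · intro y hy
            rcases Finset.mem_insert.mp hy with rfl | hy
            · exact hxS
            · exact hsS hy
          · rw [hScard, Finset.card_insert_of_notMem hxs, hcard]
        have : v x ∉ W := by
          have := hSindep
          rw [← hins] at this
          exact ((aux_indep_insert hvI hxs).mp this).2
        exact ⟨x, by rw [Finset.mem_filter]; exact ⟨Finset.mem_univ x, this⟩, hins⟩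
    rw [← hbij]
    -- count lines outside W
    have hsplit := Finset.card_filter_add_card_filter_not
      (s := (Finset.univ : Finset (Fin N))) (p := fun x : Fin N => v x ∈ W)
    have hrank : Module.finrank F ↥W = m := by rw [hW, aux_finrank_span hindep, hcard]
    have hcount := aux_line_count hF hv0 hvinj hvcov W
    rw [hrank] at hcount
    have hin : (Finset.univ.filter (fun x : Fin N => v x ∈ W)).card
        = (q ^ m - 1) / (q - 1) :=
      (Nat.div_eq_of_eq_mul_left (by omega) hcount.symm).symm
    have huniv : (Finset.univ : Finset (Fin N)).card = N := by simp
    rw [hin, huniv] at hsplit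
    omega
  · -- below degree
    intro S hS
    rw [mem_Bset] at hS
    obtain ⟨hScard, hSi, hSj, hSindep⟩ := hS
    have hijS : ({i, j} : Finset (Fin N)) ⊆ S := by
      intro x hx
      rcases Finset.mem_insert.mp hx with rfl | hx
      · exact hSi
      · rw [Finset.mem_singleton] at hx; subst hx; exact hSj
    have hsd : (S \ {i, j}).card = m - 1 := by
      have h2 : ({i, j} : Finset (Fin N)).card = 2 := by
        rw [Finset.card_insert_of_notMem (by simpa using hij), Finset.card_singleton]
      rw [Finset.card_sdiff_of_subset hijS, hScard, h2]
      omega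
    rw [← hsd]
    refine (Finset.card_bij (fun x _ => S.erase x) ?_ ?_ ?_).symm
    · intro x hx
      rw [Finset.mem_sdiff] at hx
      obtain ⟨hxS, hxij⟩ := hx
      have hxi : x ≠ i := fun h => hxij (by rw [h]; exact Finset.mem_insert_self _ _)
      have hxj : x ≠ j := fun h => hxij (by
        rw [h]; exact Finset.mem_insert_of_mem (Finset.mem_singleton_self _))
      rw [Finset.mem_bipartiteBelow, mem_Bset]
      refine ⟨⟨by rw [Finset.card_erase_of_mem hxS, hScard]; omega, ?_, ?_, ?_⟩,
        Finset.erase_subset _ _⟩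
      · exact Finset.mem_erase.mpr ⟨fun h => hxi h.symm, hSi⟩
      · exact Finset.mem_erase.mpr ⟨fun h => hxj h.symm, hSj⟩
      · exact aux_indep_mono hvI (Finset.erase_subset _ _) hSindep
    · intro x hx y hy h
      rw [Finset.mem_sdiff] at hx hy
      by_contra hne
      replace h : S.erase x = S.erase y := h
      have : x ∈ S.erase y := Finset.mem_erase.mpr ⟨hne, hx.1⟩
      rw [← h] at this
      exact (Finset.mem_erase.mp this).1 rfl
    · intro s hs
      rw [Finset.mem_bipartiteBelow, mem_Bset] at hs
      obtain ⟨⟨hcard, hi, hj, hindep⟩, hsS⟩ := hs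
      have hss : s ⊂ S := Finset.ssubset_iff_subset_ne.mpr
        ⟨hsS, by intro h; rw [h, hScard] at hcard; omega⟩
      obtain ⟨x, hxS, hxs⟩ := Finset.exists_of_ssubset hss
      refine ⟨x, ?_, ?_⟩
      · rw [Finset.mem_sdiff]
        refine ⟨hxS, fun hmem => ?_⟩
        rcases Finset.mem_insert.mp hmem with rfl | h'
        · exact hxs hi
        · rw [Finset.mem_singleton] at h'; subst h'; exact hxs hj
      · refine (Finset.eq_of_subset_of_card_le (Finset.subset_erase.mpr ⟨hsS, hxs⟩) ?_).symm
        rw [Finset.card_erase_of_mem hxS, hScard, hcard]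
        omega

end aux3



section aux4
variable {q n N : ℕ} {F : Type*} [Field F] [Fintype F] {v : Fin N → (Fin n → F)}


lemma Bcount (hF : Fintype.card F = q) (hv0 : ∀ i, v i ≠ 0)
    (hvinj : ∀ i j, Submodule.span F {v i} = Submodule.span F {v j} → i = j)
    (hvcov : ∀ w : Fin n → F, w ≠ 0 → ∃ i, w ∈ Submodule.span F {v i})
    (hq : 2 ≤ q) (hN : N = (q ^ n - 1) / (q - 1)) {i j : Fin N} (hij : i ≠ j) (d : ℕ) :
    (Bset v i j (2 + d)).card * (d.factorial * (q - 1) ^ d)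
      = ∏ k ∈ Finset.range d, (q ^ n - q ^ (2 + k)) := by
  have hdvd : ∀ m : ℕ, (q - 1) ∣ (q ^ m - 1) := fun m => by
    simpa using Nat.sub_dvd_pow_sub_pow q 1 m
  have hNq : (q - 1) * N = q ^ n - 1 := by rw [hN, Nat.mul_div_cancel' (hdvd n)]
  induction d with
  | zero => simp [Bset_two hv0 hvinj hij]
  | succ d ih =>
    have hstep := Bset_step hF hv0 hvinj hvcov hq hij (2 + d)
    have hl : (q - 1) * ((q ^ (2 + d) - 1) / (q - 1)) = q ^ (2 + d) - 1 :=
      Nat.mul_div_cancel' (hdvd _)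
    have hpow1 : 1 ≤ q ^ (2 + d) := Nat.one_le_pow _ _ (by omega)
    have hpown : q ^ (2 + d) ≤ q ^ n ∨ True := Or.inr trivial
    have hE : (q - 1) * (N - (q ^ (2 + d) - 1) / (q - 1)) = q ^ n - q ^ (2 + d) := by
      rw [Nat.mul_sub, hNq, hl]
      have h1n : 1 ≤ q ^ n := Nat.one_le_pow _ _ (by omega)
      omega
    have hidx : 2 + (d + 1) = 2 + d + 1 := by omega
    have hm1 : 2 + d - 1 = d + 1 := by omega
    rw [hidx, Finset.prod_range_succ, ← ih, Nat.factorial_succ]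
    calc (Bset v i j (2 + d + 1)).card * ((d + 1) * d.factorial * (q - 1) ^ (d + 1))
        = ((Bset v i j (2 + d + 1)).card * (2 + d - 1)) * (d.factorial * (q - 1) ^ d)
            * (q - 1) := by
          rw [hm1]; ring
      _ = ((Bset v i j (2 + d)).card * (N - (q ^ (2 + d) - 1) / (q - 1)))
            * (d.factorial * (q - 1) ^ d) * (q - 1) := by rw [hstep]
      _ = ((Bset v i j (2 + d)).card * (d.factorial * (q - 1) ^ d))
            * ((q - 1) * (N - (q ^ (2 + d) - 1) / (q - 1))) := by ring
      _ = (Bset v i j (2 + d)).card * (d.factorial * (q - 1) ^ d)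
            * (q ^ n - q ^ (2 + d)) := by rw [hE]

lemma Bcard_eq {t : ℕ} (hn : 2 ≤ n) (hF : Fintype.card F = q) (hv0 : ∀ i, v i ≠ 0)
    (hvinj : ∀ i j, Submodule.span F {v i} = Submodule.span F {v j} → i = j)
    (hvcov : ∀ w : Fin n → F, w ≠ 0 → ∃ i, w ∈ Submodule.span F {v i})
    (hq : 2 ≤ q) (hN : N = (q ^ n - 1) / (q - 1))
    (ht : t = (q ^ ((n * (n - 1) - 2) / 2) *
        ∏ k ∈ Finset.Icc 1 (n - 2), (q ^ k - 1) / (q - 1)) / (n - 2).factorial)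
    {i j : Fin N} (hij : i ≠ j) :
    (Bset v i j n).card = t := by
  have hdvd : ∀ m : ℕ, (q - 1) ∣ (q ^ m - 1) := fun m => by
    simpa using Nat.sub_dvd_pow_sub_pow q 1 m
  obtain ⟨d, hnd⟩ : ∃ d, 2 + d = n := ⟨n - 2, by omega⟩
  have hd : n - 2 = d := by omega
  rw [hd] at ht
  have A := Bcount hF hv0 hvinj hvcov hq hN hij d
  rw [hnd] at A
  have R1 : ∀ k ∈ Finset.range d, q ^ n - q ^ (2 + k) = q ^ (2 + k) * (q ^ (d - k) - 1) := by
    intro k hk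
    rw [Finset.mem_range] at hk
    rw [Nat.mul_sub, mul_one, ← pow_add]
    congr 2
    omega
  rw [Finset.prod_congr rfl R1, Finset.prod_mul_distrib, Finset.prod_pow_eq_pow_sum] at A
  have hS := Finset.sum_range_id_mul_two d
  have hsum : (∑ k ∈ Finset.range d, (2 + k)) = (n * (n - 1) - 2) / 2 := by
    rw [Finset.sum_add_distrib, Finset.sum_const, Finset.card_range, smul_eq_mul]
    rw [Nat.mul_sub, mul_one] at hS
    have hge : d ≤ d * d := by nlinarith
    have h1 : n - 1 = d + 1 := by omega
    have h2 : n * (n - 1) = d * d + 3 * d + 2 := by rw [h1, ← hnd]; ring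
    rw [h2]
    generalize d * d = D at hS hge ⊢
    omega
  rw [hsum] at A
  have hrefl : (∏ k ∈ Finset.range d, (q ^ (d - k) - 1))
      = ∏ k ∈ Finset.range d, (q ^ (k + 1) - 1) := by
    rw [← Finset.prod_range_reflect (fun k => q ^ (k + 1) - 1) d]
    refine Finset.prod_congr rfl fun k hk => ?_
    rw [Finset.mem_range] at hk
    congr 2
    omega
  have hIcc : (∏ k ∈ Finset.range d, (q ^ (k + 1) - 1))
      = ∏ k ∈ Finset.Icc 1 d, (q ^ k - 1) := by
    refine Finset.prod_bij' (fun k _ => k + 1) (fun k _ => k - 1) ?_ ?_ ?_ ?_ ?_ <;>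
      intro a ha <;> simp only [Finset.mem_range, Finset.mem_Icc] at ha ⊢ <;> omega
  have hsplit : (∏ k ∈ Finset.Icc 1 d, (q ^ k - 1))
      = (∏ k ∈ Finset.Icc 1 d, (q ^ k - 1) / (q - 1)) * (q - 1) ^ d := by
    have : (q - 1) ^ d = ∏ _k ∈ Finset.Icc 1 d, (q - 1) := by
      have hcard : (Finset.Icc 1 d).card = d := by simp
      rw [Finset.prod_const, hcard]
    rw [this, ← Finset.prod_mul_distrib]
    exact Finset.prod_congr rfl fun k _ => (Nat.div_mul_cancel (hdvd k)).symm
  rw [hrefl, hIcc, hsplit] at A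
  rw [← mul_assoc, ← mul_assoc] at A
  have hX : (Bset v i j n).card * d.factorial
      = q ^ ((n * (n - 1) - 2) / 2) * ∏ k ∈ Finset.Icc 1 d, (q ^ k - 1) / (q - 1) :=
    Nat.eq_of_mul_eq_mul_right (Nat.pow_pos (by omega)) A
  rw [ht, ← hX, Nat.mul_div_cancel _ (Nat.factorial_pos d)]

end aux4



lemma aux_eval_pderiv {M : ℕ} (i j : Fin M) (s : Finset (Fin M)) :
    MvPolynomial.eval (fun _ => (1 : ℚ))
      (MvPolynomial.pderiv i (MvPolynomial.pderiv j
        (∏ k ∈ s, (MvPolynomial.X k : MvPolynomial (Fin M) ℚ)))) =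
      if i ≠ j ∧ i ∈ s ∧ j ∈ s then 1 else 0 := by
  have hmono : (∏ k ∈ s, (MvPolynomial.X k : MvPolynomial (Fin M) ℚ))
      = MvPolynomial.monomial (∑ k ∈ s, Finsupp.single k 1) 1 := by
    rw [MvPolynomial.monomial_sum_one]
    refine Finset.prod_congr rfl fun k _ => ?_
    rw [← MvPolynomial.X_pow_eq_monomial, pow_one]
  have hdapp : ∀ x : Fin M, (∑ k ∈ s, Finsupp.single k (1 : ℕ)) x
      = if x ∈ s then 1 else 0 := by
    intro x
    rw [Finset.sum_apply']
    simp [Finsupp.single_apply]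
  rw [hmono, MvPolynomial.pderiv_monomial, MvPolynomial.pderiv_monomial,
    MvPolynomial.eval_monomial]
  set d := ∑ k ∈ s, Finsupp.single k (1 : ℕ) with hd
  have hprod : ((d - Finsupp.single j 1 - Finsupp.single i 1).prod
      fun _ e => (1 : ℚ) ^ e) = 1 := by
    simp [Finsupp.prod]
  rw [hprod, mul_one, one_mul]
  have hsub : (d - Finsupp.single j (1 : ℕ)) i = if i = j then 0 else (if i ∈ s then 1 else 0) := by
    rw [Finsupp.tsub_apply, hdapp, Finsupp.single_apply]
    by_cases hij : i = j
    · subst hij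
      simp only [if_pos rfl]
      split_ifs <;> rfl
    · rw [if_neg (fun h : j = i => hij h.symm), if_neg hij]
      omega
  rw [hsub, hdapp]
  by_cases hij : i = j
  · simp [hij]
  · by_cases hi : i ∈ s <;> by_cases hj : j ∈ s <;> simp [hij, hi, hj]

lemma aux_det_J {N : ℕ} :
    ((Matrix.of fun _ _ : Fin N => (1 : ℚ)) - 1).det = (-1) ^ N * (1 - (N : ℚ)) := by
  have key : (1 : Matrix (Fin N) (Fin N) ℚ)
      + Matrix.replicateCol Unit (fun _ => (1 : ℚ)) * Matrix.replicateRow Unit (fun _ => (-1 : ℚ))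
      = 1 - Matrix.of fun _ _ : Fin N => (1 : ℚ) := by
    ext i k
    simp [Matrix.mul_apply, Matrix.replicateCol, Matrix.replicateRow, sub_eq_add_neg]
  have hdet2 : ((1 : Matrix (Fin N) (Fin N) ℚ) - Matrix.of fun _ _ => (1 : ℚ)).det
      = 1 - (N : ℚ) := by
    rw [← key, Matrix.det_one_add_replicateCol_mul_replicateRow]
    simp [dotProduct]
    ring
  have hneg : (Matrix.of fun _ _ : Fin N => (1 : ℚ)) - 1
      = -((1 : Matrix (Fin N) (Fin N) ℚ) - Matrix.of fun _ _ => (1 : ℚ)) := by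
    rw [neg_sub]
  rw [hneg, Matrix.det_neg, hdet2, Fintype.card_fin]

open scoped Classical in
/-- The Hessian of the Macaulay dual generator evaluated at `X_1 = ⋯ = X_N = 1` equals
`Φ(N, 0, t_{n,2,q})`, where `t_{n,2,q} = (q^((n(n-1)-2)/2)/(n-2)!) ∏_{k=1}^{n-2}[k]_q`;
hence the absolute value of its determinant is `(N-1) · t_{n,2,q}^N`. -/
theorem hessian_macaulay_dual (q n N : ℕ) (hn : 2 ≤ n)
    (F : Type*) [Field F] [Fintype F] (hF : Fintype.card F = q)
    (hN : N = (q ^ n - 1) / (q - 1))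
    (v : Fin N → (Fin n → F))
    (hv0 : ∀ i, v i ≠ 0)
    (hvinj : ∀ i j, Submodule.span F {v i} = Submodule.span F {v j} → i = j)
    (hvcov : ∀ w : Fin n → F, w ≠ 0 → ∃ i, w ∈ Submodule.span F {v i})
    (FV : MvPolynomial (Fin N) ℚ)
    (hFV : FV = ∑ s ∈ Finset.univ.filter (fun s : Finset (Fin N) =>
        s.card = n ∧ LinearIndependent F (fun i : s => v i)), ∏ i ∈ s, MvPolynomial.X i)
    (H : Matrix (Fin N) (Fin N) ℚ)
    (hH : ∀ i j, H i j = MvPolynomial.eval (fun _ => (1 : ℚ))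
        (MvPolynomial.pderiv i (MvPolynomial.pderiv j FV)))
    (t : ℕ)
    (ht : t = (q ^ ((n * (n - 1) - 2) / 2) *
        ∏ k ∈ Finset.Icc 1 (n - 2), (q ^ k - 1) / (q - 1)) / (n - 2).factorial) :
    (∀ i j : Fin N, H i j = if i = j then 0 else (t : ℚ)) ∧
    |H.det| = ((N - 1) * t ^ N : ℕ) := by
  have hvI : Function.Injective v := aux_vinj hvinj
  have hq : 2 ≤ q := by
    rw [← hF]; exact Fintype.one_lt_card
  have hpart1 : ∀ i j : Fin N, H i j = if i = j then 0 else (t : ℚ) := by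
    intro i j
    have hsum : H i j = ∑ s ∈ Finset.univ.filter (fun s : Finset (Fin N) =>
        s.card = n ∧ LinearIndependent F (fun i : s => v i)),
        (if i ≠ j ∧ i ∈ s ∧ j ∈ s then (1 : ℚ) else 0) := by
      rw [hH, hFV, map_sum, map_sum, map_sum]
      exact Finset.sum_congr rfl fun s _ => aux_eval_pderiv i j s
    rw [hsum, Finset.sum_boole, Finset.filter_filter]
    by_cases hij : i = j
    · rw [if_pos hij]
      subst hij
      rw [Finset.filter_false_of_mem (fun s _ => by simp), Finset.card_empty, Nat.cast_zero]
    · rw [if_neg hij]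
      have hfil : (Finset.univ.filter (fun s : Finset (Fin N) =>
          (s.card = n ∧ LinearIndependent F (fun i : s => v i)) ∧ (i ≠ j ∧ i ∈ s ∧ j ∈ s)))
          = Bset v i j n := by
        ext s
        rw [Finset.mem_filter, mem_Bset]
        simp only [Finset.mem_univ, true_and]
        tauto
      rw [hfil, Bcard_eq hn hF hv0 hvinj hvcov hq hN ht hij]
  refine ⟨hpart1, ?_⟩
  have hN1 : 1 ≤ N := by
    have hqn : q ≤ q ^ n := Nat.le_self_pow (by omega) q
    rw [hN, Nat.one_le_div_iff (by omega)]
    omega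
  have hHmat : H = (t : ℚ) • ((Matrix.of fun _ _ : Fin N => (1 : ℚ)) - 1) := by
    ext i k
    rw [hpart1 i k]
    by_cases hik : i = k
    · subst hik; simp
    · simp [Matrix.one_apply, hik]
  rw [hHmat, Matrix.det_smul, aux_det_J, Fintype.card_fin]
  rw [abs_mul, abs_mul, abs_pow, abs_pow, abs_neg, abs_one, one_pow, one_mul]
  have h1 : |(t : ℚ)| = t := abs_of_nonneg (by positivity)
  have h2 : |1 - (N : ℚ)| = (N : ℚ) - 1 := by
    rw [abs_of_nonpos (by
      have : (1 : ℚ) ≤ (N : ℚ) := by exact_mod_cast hN1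
      linarith), neg_sub]
  rw [h1, h2]
  push_cast [hN1]
  ring
end
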